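/- arXiv:1609.02103 — 9 statements merged into one kernel-verified Lean document; each statement's English description precedes it below -/
import Mathlib

section
/- Let I be a homogeneous ideal in ℂ[x_1,…,x_N] and suppose that for some integers d and q with q < d one has dim_ℂ I_d ≥ C(N+d−q−1, d−q) (the dimension of the full space of homogeneous polynomials of degree d−q in N variables). Then for every τ ≥ 0, dim_ℂ I_{d+τ} ≥ C(N+τ+d−q−1, τ+d−q). -/
/-!
Order monomials lexicographically. The leading monomials of the nonzero elements of `I_e` form a
set `B_e` of degree-`e` monomials with `#B_e = dim I_e`, and `xᵢ · B_e ⊆ B_{e+1}` for every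
variable `xᵢ`. So it suffices to show: if a set `B` of degree-`d` monomials in `n` variables has at
least `C(n+k-1, k)` elements, with `k ≤ d`, then its upper shadow `{xᵢ · m | m ∈ B}` has at least
`C(n+k, k+1)` elements.

An `(i, j)`-compression (`i < j`) fixes the part of each monomial free of `xᵢ, xⱼ` and the total
degree in `xᵢ, xⱼ`, and pushes the `xⱼ`-degrees occurring in each such fibre down to an initial
segment of `ℕ`. It keeps `#B`, does not enlarge the shadow, and lowers the total sum of variable
indices unless `B` is already closed under `m ↦ xᵢ · m / xⱼ`; so we may assume `B` is strongly
stable. Then slice `B` by the exponent `j` of its last variable into sets `Bⱼ`. If the slice `B₀`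
is large, induction on the number of variables and Pascal's rule give the bound, because
`#shadow B ≥ #B + #shadow B₀`. Otherwise stability (`shadow Bⱼ₊₁ ⊆ Bⱼ`) and induction force every
slice to be small, and the slices would add up to fewer than `C(n+k-1, k)` monomials.
-/

/-- The degree-`e` graded component of an ideal `I ⊆ ℂ[x_1,…,x_N]`: the ℂ-span of the
homogeneous degree-`e` elements of `I`. -/
noncomputable def idealComponent {N : ℕ} (I : Ideal (MvPolynomial (Fin N) ℂ)) (e : ℕ) :
    Submodule ℂ (MvPolynomial (Fin N) ℂ) :=
  Submodule.span ℂ { p | p ∈ I ∧ p.IsHomogeneous e }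

open Finset

theorem Nat.sum_range_multichoose_sub (n k : ℕ) :
    ∑ j ∈ range (k + 1), n.multichoose (k - j) = (n + 1).multichoose k := by
  have hreflect := sum_range_reflect n.multichoose (k + 1)
  simp only [Nat.add_sub_cancel] at hreflect
  rw [hreflect, Nat.sum_range_multichoose, Nat.multichoose_eq, Nat.add_right_comm,
    Nat.add_sub_cancel, add_comm, Nat.choose_symm_add]

theorem Finset.sum_range_card_le_sum (S : Finset ℕ) : ∑ b ∈ range #S, b ≤ ∑ b ∈ S, b := by
  induction S using Finset.induction_on_max with
  | empty => simp
  | insert a s ha ih =>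
    have hcard : #s ≤ a := by simpa using card_le_card fun x hx => mem_range.2 (ha x hx)
    have ha' : a ∉ s := fun h => lt_irrefl a (ha a h)
    rw [card_insert_of_notMem ha', sum_range_succ, sum_insert ha']
    omega

theorem Finset.sum_range_card_lt_sum {S : Finset ℕ} (hS : S ≠ range #S) :
    ∑ b ∈ range #S, b < ∑ b ∈ S, b := by
  obtain ⟨x, hxS, hx⟩ : ∃ x ∈ S, #S ≤ x := by
    by_contra! h
    exact hS (eq_of_subset_of_card_le (fun x hx => mem_range.2 (h x hx)) (by simp))
  obtain ⟨t, ht⟩ : ∃ t, #S = t + 1 := Nat.exists_eq_add_one.2 (card_pos.2 ⟨x, hxS⟩)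
  have herase := sum_range_card_le_sum (S.erase x)
  rw [card_erase_of_mem hxS, ht, Nat.add_sub_cancel] at herase
  rw [← sum_erase_add S _ hxS, ht, sum_range_succ]
  omega

theorem Multiset.filter_ne_add_replicate_count {α : Type*} [DecidableEq α] (m : Multiset α)
    (x : α) : m.filter (· ≠ x) + Multiset.replicate (m.count x) x = m := by
  have h := Multiset.filter_add_not (· ≠ x) m
  simp only [ne_eq, not_not] at h
  rwa [Multiset.filter_eq'] at h

namespace Macaulay

/-- Monomials of degree `d` in the variables `x₀, …, x_{n-1}`, a monomial being the multiset of
the indices of its variables. -/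
def monomials (n d : ℕ) : Finset (Multiset ℕ) :=
  ((range n).sym d).image Sym.toMultiset

theorem mem_monomials {n d : ℕ} {m : Multiset ℕ} :
    m ∈ monomials n d ↔ Multiset.card m = d ∧ ∀ x ∈ m, x < n := by
  simp only [monomials, mem_image]
  constructor
  · rintro ⟨s, hs, rfl⟩
    exact ⟨s.2, fun x hx => mem_range.1 (mem_sym_iff.1 hs x hx)⟩
  · rintro ⟨hcard, hlt⟩
    exact ⟨(⟨m, hcard⟩ : Sym ℕ d), mem_sym_iff.2 fun x hx => mem_range.2 (hlt x hx), rfl⟩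

def shadow (n : ℕ) (B : Finset (Multiset ℕ)) : Finset (Multiset ℕ) :=
  B.biUnion fun m => (range n).image (· ::ₘ m)

variable {n d : ℕ} {B : Finset (Multiset ℕ)}

theorem mem_shadow {c : Multiset ℕ} : c ∈ shadow n B ↔ ∃ m ∈ B, ∃ i < n, i ::ₘ m = c := by
  simp [shadow]

theorem cons_mem_shadow {m : Multiset ℕ} {i : ℕ} (hm : m ∈ B) (hi : i < n) :
    i ::ₘ m ∈ shadow n B :=
  mem_shadow.2 ⟨m, hm, i, hi, rfl⟩

theorem shadow_subset_monomials (hB : B ⊆ monomials n d) :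
    shadow n B ⊆ monomials n (d + 1) := by
  intro c hc
  obtain ⟨m, hm, i, hi, rfl⟩ := mem_shadow.1 hc
  obtain ⟨hcard, hlt⟩ := mem_monomials.1 (hB hm)
  refine mem_monomials.2 ⟨by simp [hcard], fun x hx => ?_⟩
  rcases Multiset.mem_cons.1 hx with rfl | hx
  exacts [hi, hlt x hx]

theorem card_le_card_shadow_of_nonempty (hB : B.Nonempty) : n ≤ #(shadow n B) := by
  obtain ⟨m, hm⟩ := hB
  calc n = #((range n).image (· ::ₘ m)) := by
        rw [card_image_of_injective _ fun a b h => (Multiset.cons_inj_left m).1 h, card_range]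
    _ ≤ #(shadow n B) := card_le_card fun c hc => by
        obtain ⟨i, hi, rfl⟩ := mem_image.1 hc
        exact cons_mem_shadow hm (mem_range.1 hi)

def slice (n j : ℕ) (B : Finset (Multiset ℕ)) : Finset (Multiset ℕ) :=
  (B.filter (Multiset.count n · = j)).image (Multiset.filter (· ≠ n))

theorem mem_slice {j : ℕ} {c : Multiset ℕ} :
    c ∈ slice n j B ↔ n ∉ c ∧ c + Multiset.replicate j n ∈ B := by
  simp only [slice, mem_image, mem_filter]
  constructor
  · rintro ⟨m, ⟨hm, rfl⟩, rfl⟩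
    exact ⟨by simp, by rwa [Multiset.filter_ne_add_replicate_count]⟩
  · rintro ⟨hn, hmem⟩
    refine ⟨_, ⟨hmem, by simp [Multiset.count_eq_zero.2 hn]⟩, ?_⟩
    rw [Multiset.filter_add, Multiset.filter_eq_self.2 fun a ha => ne_of_mem_of_not_mem ha hn,
      Multiset.filter_eq_nil.2 fun a ha h => h (Multiset.eq_of_mem_replicate ha), add_zero]

theorem sum_card_slice (hB : B ⊆ monomials (n + 1) d) :
    ∑ j ∈ range (d + 1), #(slice n j B) = #B := by
  have hcard (j : ℕ) : #(slice n j B) = #(B.filter (Multiset.count n · = j)) := by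
    refine card_image_of_injOn fun m₁ h₁ m₂ h₂ he => ?_
    simp only [coe_filter, Set.mem_ofPred_eq] at h₁ h₂
    rw [← Multiset.filter_ne_add_replicate_count m₁ n,
      ← Multiset.filter_ne_add_replicate_count m₂ n, h₁.2, h₂.2]
    exact congrArg (· + _) he
  simp only [hcard]
  refine (card_eq_sum_card_fiberwise fun m hm => ?_).symm
  have := Multiset.count_le_card n m
  simp only [coe_range, Set.mem_Iio, (mem_monomials.1 (hB hm)).1] at this ⊢
  omega

theorem slice_subset_monomials {j : ℕ} (hB : B ⊆ monomials (n + 1) d) :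
    slice n j B ⊆ monomials n (d - j) := by
  intro c hc
  obtain ⟨hn, hmem⟩ := mem_slice.1 hc
  obtain ⟨hcard, hlt⟩ := mem_monomials.1 (hB hmem)
  rw [Multiset.card_add, Multiset.card_replicate] at hcard
  refine mem_monomials.2 ⟨by omega, fun x hx => ?_⟩
  have := hlt x (Multiset.mem_add.2 (Or.inl hx))
  have : x ≠ n := fun h => hn (h ▸ hx)
  omega

theorem card_add_card_shadow_slice_zero_le (hB : B ⊆ monomials (n + 1) d) :
    #B + #(shadow n (slice n 0 B)) ≤ #(shadow (n + 1) B) := by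
  have hshifted (j : ℕ) : slice n j B ⊆ slice n (j + 1) (shadow (n + 1) B) := by
    intro c hc
    obtain ⟨hn, hmem⟩ := mem_slice.1 hc
    refine mem_slice.2 ⟨hn, ?_⟩
    rw [Multiset.replicate_succ, Multiset.add_cons]
    exact cons_mem_shadow hmem n.lt_succ_self
  have hzero : shadow n (slice n 0 B) ⊆ slice n 0 (shadow (n + 1) B) := by
    intro c' hc'
    obtain ⟨c, hc, i, hi, rfl⟩ := mem_shadow.1 hc'
    obtain ⟨hn, hmem⟩ := mem_slice.1 hc
    refine mem_slice.2 ⟨fun h => ?_, ?_⟩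
    · rcases Multiset.mem_cons.1 h with h | h
      exacts [hi.ne' h, hn h]
    · simpa using cons_mem_shadow (by simpa using hmem) (Nat.lt_succ_of_lt hi)
  calc #B + #(shadow n (slice n 0 B))
      ≤ ∑ j ∈ range (d + 1), #(slice n (j + 1) (shadow (n + 1) B))
        + #(slice n 0 (shadow (n + 1) B)) := by
        rw [← sum_card_slice hB]
        exact add_le_add (sum_le_sum fun j _ => card_le_card (hshifted j)) (card_le_card hzero)
    _ = #(shadow (n + 1) B) := by
        rw [← sum_range_succ' (fun j => #(slice n j (shadow (n + 1) B))),
          sum_card_slice (shadow_subset_monomials hB)]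

def IsStronglyStable (B : Finset (Multiset ℕ)) : Prop :=
  ∀ m ∈ B, ∀ j ∈ m, ∀ i < j, i ::ₘ m.erase j ∈ B

theorem isStronglyStable_slice {j : ℕ} (hB : B ⊆ monomials (n + 1) d)
    (h : IsStronglyStable B) : IsStronglyStable (slice n j B) := by
  intro c hc l hl i hi
  obtain ⟨hn, hmem⟩ := mem_slice.1 hc
  have hmove := h _ hmem l (Multiset.mem_add.2 (Or.inl hl)) i hi
  rw [Multiset.erase_add_left_pos _ hl, ← Multiset.cons_add] at hmove
  refine mem_slice.2 ⟨fun h' => ?_, hmove⟩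
  have hln : l < n + 1 := (mem_monomials.1 (hB hmem)).2 l (Multiset.mem_add.2 (Or.inl hl))
  have hln' : l ≠ n := fun h => hn (h ▸ hl)
  rcases Multiset.mem_cons.1 h' with h' | h'
  exacts [by omega, hn (Multiset.mem_of_mem_erase h')]

theorem IsStronglyStable.shadow_slice_succ_subset {j : ℕ} (h : IsStronglyStable B) :
    shadow n (slice n (j + 1) B) ⊆ slice n j B := by
  intro c' hc'
  obtain ⟨c, hc, i, hi, rfl⟩ := mem_shadow.1 hc'
  obtain ⟨hn, hmem⟩ := mem_slice.1 hc
  have hmove := h _ hmem n (by simp) i hi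
  rw [Multiset.erase_add_right_pos _ (by simp), Multiset.replicate_succ,
    Multiset.erase_cons_head, ← Multiset.cons_add] at hmove
  refine mem_slice.2 ⟨fun h' => ?_, hmove⟩
  rcases Multiset.mem_cons.1 h' with h' | h'
  exacts [hi.ne' h', hn h']

variable {k : ℕ}

theorem IsStronglyStable.slice_eq_empty_of_le {j : ℕ} (hn : 0 < n) (h : IsStronglyStable B)
    (hk : slice n k B = ∅) (hkj : k ≤ j) : slice n j B = ∅ := by
  induction j, hkj using Nat.le_induction with
  | base => exact hk
  | succ j _ ih =>
    refine eq_empty_iff_forall_notMem.2 fun c hc => ?_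
    have := h.shadow_slice_succ_subset (cons_mem_shadow hc hn)
    simp [ih] at this

section StableInduction

variable
  (ih : ∀ {d k : ℕ} {B : Finset (Multiset ℕ)}, IsStronglyStable B → k ≤ d →
    B ⊆ monomials n d → n.multichoose k ≤ #B → n.multichoose (k + 1) ≤ #(shadow n B))
  (hB : B ⊆ monomials (n + 1) d) (h : IsStronglyStable B) (hk : k ≤ d)
include ih hB h hk

theorem IsStronglyStable.card_slice_lt (h0 : #(slice n 0 B) < n.multichoose k) :
    ∀ j ≤ k, #(slice n j B) < n.multichoose (k - j) := by
  intro j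
  induction j with
  | zero => simpa using h0
  | succ j ihj =>
    intro hj
    by_contra! hge
    have hshadow := ih (isStronglyStable_slice hB h) (by omega) (slice_subset_monomials hB) hge
    rw [show k - (j + 1) + 1 = k - j by omega] at hshadow
    exact (ihj (by omega)).not_ge
      (hshadow.trans (card_le_card h.shadow_slice_succ_subset))

theorem IsStronglyStable.card_lt_of_card_slice_zero_lt (hk0 : 0 < k)
    (h0 : #(slice n 0 B) < n.multichoose k) : #B < (n + 1).multichoose k := by
  have hn : 0 < n := by
    rcases n with _ | n
    · obtain ⟨k, rfl⟩ := Nat.exists_eq_add_of_lt hk0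
      simp at h0
    · exact n.succ_pos
  have hlt := h.card_slice_lt ih hB hk h0
  have hempty : slice n k B = ∅ := by simpa using hlt k le_rfl
  calc #B = ∑ j ∈ range (d + 1), #(slice n j B) := (sum_card_slice hB).symm
    _ = ∑ j ∈ range (k + 1), #(slice n j B) := by
        refine (sum_subset (range_subset_range.2 (by omega)) fun j _ hj => ?_).symm
        rw [h.slice_eq_empty_of_le hn hempty (by simp at hj; omega), card_empty]
    _ < ∑ j ∈ range (k + 1), n.multichoose (k - j) :=
        sum_lt_sum_of_nonempty nonempty_range_add_one fun j hj =>
          hlt j (Nat.lt_succ_iff.1 (mem_range.1 hj))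
    _ = (n + 1).multichoose k := Nat.sum_range_multichoose_sub n k

end StableInduction

theorem IsStronglyStable.multichoose_succ_le_card_shadow (h : IsStronglyStable B)
    (hk : k ≤ d) (hB : B ⊆ monomials n d) (hcard : n.multichoose k ≤ #B) :
    n.multichoose (k + 1) ≤ #(shadow n B) := by
  induction n generalizing d k B with
  | zero => simp
  | succ n ih =>
    rcases k with _ | k
    · rw [zero_add, Nat.multichoose_one_right]
      exact card_le_card_shadow_of_nonempty (card_pos.1 (by simpa using hcard))
    by_cases h0 : n.multichoose (k + 1) ≤ #(slice n 0 B)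
    · calc (n + 1).multichoose (k + 1 + 1)
          = (n + 1).multichoose (k + 1) + n.multichoose (k + 1 + 1) := by
            rw [Nat.multichoose_succ_succ, add_comm]
        _ ≤ #B + #(shadow n (slice n 0 B)) :=
            add_le_add hcard (ih (isStronglyStable_slice hB h) hk (slice_subset_monomials hB) h0)
        _ ≤ #(shadow (n + 1) B) := card_add_card_shadow_slice_zero_le hB
    · exact absurd hcard (h.card_lt_of_card_slice_zero_lt ih hB hk k.succ_pos (not_le.1 h0)).not_ge

section Compression

variable (i j : ℕ)

def key (m : Multiset ℕ) : Multiset ℕ × ℕ :=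
  (m.filter fun x => x ≠ i ∧ x ≠ j, m.count i + m.count j)

def assemble (κ : Multiset ℕ × ℕ) (b : ℕ) : Multiset ℕ :=
  κ.1 + Multiset.replicate (κ.2 - b) i + Multiset.replicate b j

variable {i j}

theorem assemble_key_count (hij : i ≠ j) (m : Multiset ℕ) :
    assemble i j (key i j m) (m.count j) = m := by
  ext x
  simp only [assemble, key, Multiset.count_add, Multiset.count_filter, Multiset.count_replicate]
  split_ifs <;> grind

theorem key_assemble (hij : i ≠ j) {w : Multiset ℕ} {b : ℕ} (hb : b ≤ (key i j w).2) :
    key i j (assemble i j (key i j w) b) = key i j w := by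
  simp only [key, assemble, Prod.mk.injEq] at hb ⊢
  constructor
  · ext x
    simp only [Multiset.count_add, Multiset.count_filter, Multiset.count_replicate]
    split_ifs <;> grind
  · simp [Multiset.count_replicate, hij, hij.symm]
    omega

theorem count_assemble_key (hij : i ≠ j) (w : Multiset ℕ) (b : ℕ) :
    (assemble i j (key i j w) b).count j = b := by
  simp [assemble, key, Multiset.count_replicate, hij]

theorem key_cons {w c : Multiset ℕ} (h : key i j w = key i j c) :
    key i j (k ::ₘ w) = key i j (k ::ₘ c) := by
  simp only [key, Prod.mk.injEq, Multiset.filter_cons, Multiset.count_cons] at h ⊢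
  grind

theorem key_cons_left (w : Multiset ℕ) : key i j (i ::ₘ w) = key i j (j ::ₘ w) := by
  simp only [key, Prod.mk.injEq, Multiset.filter_cons, Multiset.count_cons]
  grind

theorem cons_erase_eq_assemble (hij : i ≠ j) {m : Multiset ℕ} (hjm : j ∈ m) :
    i ::ₘ m.erase j = assemble i j (key i j m) (m.count j - 1) := by
  have hpos := Multiset.count_pos.2 hjm
  ext x
  rw [← Multiset.sub_singleton]
  simp only [assemble, key, Multiset.count_cons, Multiset.count_sub, Multiset.count_singleton,
    Multiset.count_add, Multiset.count_filter, Multiset.count_replicate]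
  split_ifs <;> grind

variable (i j) in
def jDegrees (X : Finset (Multiset ℕ)) (κ : Multiset ℕ × ℕ) : Finset ℕ :=
  (X.filter (key i j · = κ)).image (Multiset.count j)

variable (i j) in
def compress (X : Finset (Multiset ℕ)) : Finset (Multiset ℕ) :=
  (X.image (key i j)).biUnion fun κ => (range #(jDegrees i j X κ)).image (assemble i j κ)

variable {X : Finset (Multiset ℕ)} {κ : Multiset ℕ × ℕ}

theorem mem_jDegrees {b : ℕ} :
    b ∈ jDegrees i j X κ ↔ ∃ w ∈ X, key i j w = κ ∧ w.count j = b := by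
  simp [jDegrees, and_assoc]

theorem le_of_mem_jDegrees {b : ℕ} (hb : b ∈ jDegrees i j X κ) : b ≤ κ.2 := by
  obtain ⟨w, -, rfl, rfl⟩ := mem_jDegrees.1 hb
  simp [key]

theorem card_jDegrees_le : #(jDegrees i j X κ) ≤ κ.2 + 1 :=
  (card_le_card fun _ hb => mem_range.2 (Nat.lt_succ_of_le (le_of_mem_jDegrees hb))).trans_eq
    (card_range _)

theorem key_assemble_of_lt (hij : i ≠ j) (hκ : κ ∈ X.image (key i j)) {b : ℕ}
    (hb : b < #(jDegrees i j X κ)) :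
    key i j (assemble i j κ b) = κ ∧ (assemble i j κ b).count j = b := by
  obtain ⟨w, -, rfl⟩ := mem_image.1 hκ
  have := card_jDegrees_le (i := i) (j := j) (X := X) (κ := key i j w)
  exact ⟨key_assemble hij (by omega), count_assemble_key hij w b⟩

theorem mem_compress (hij : i ≠ j) {c : Multiset ℕ} :
    c ∈ compress i j X ↔ c.count j < #(jDegrees i j X (key i j c)) := by
  constructor
  · intro hc
    obtain ⟨κ, hκ, hc⟩ := mem_biUnion.1 hc
    obtain ⟨b, hb, rfl⟩ := mem_image.1 hc
    obtain ⟨hkey, hcount⟩ := key_assemble_of_lt hij hκ (mem_range.1 hb)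
    rwa [hkey, hcount, ← mem_range]
  · intro hc
    obtain ⟨b, hb⟩ := card_pos.1 (Nat.zero_lt_of_lt hc)
    obtain ⟨w, hw, hkey, -⟩ := mem_jDegrees.1 hb
    refine mem_biUnion.2 ⟨key i j c, hkey ▸ mem_image_of_mem _ hw, mem_image.2 ?_⟩
    exact ⟨c.count j, mem_range.2 hc, assemble_key_count hij c⟩

theorem sum_eq_sum_jDegrees (hij : i ≠ j) (g : Multiset ℕ → ℕ) :
    ∑ m ∈ X, g m = ∑ κ ∈ X.image (key i j), ∑ b ∈ jDegrees i j X κ, g (assemble i j κ b) := by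
  rw [← sum_fiberwise_of_maps_to fun m hm => mem_image_of_mem (key i j) hm]
  refine sum_congr rfl fun κ _ => ?_
  rw [jDegrees, sum_image fun m₁ h₁ m₂ h₂ he => ?_]
  · refine sum_congr rfl fun m hm => ?_
    rw [← (mem_filter.1 hm).2, assemble_key_count hij]
  · rw [← assemble_key_count hij m₁, ← assemble_key_count hij m₂, he,
      (mem_filter.1 h₁).2, (mem_filter.1 h₂).2]

theorem sum_compress (hij : i ≠ j) (g : Multiset ℕ → ℕ) :
    ∑ c ∈ compress i j X, g c =
      ∑ κ ∈ X.image (key i j), ∑ b ∈ range #(jDegrees i j X κ), g (assemble i j κ b) := by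
  rw [compress, sum_biUnion]
  · refine sum_congr rfl fun κ hκ => sum_image fun b₁ h₁ b₂ h₂ he => ?_
    rw [← (key_assemble_of_lt hij hκ (mem_range.1 h₁)).2,
      ← (key_assemble_of_lt hij hκ (mem_range.1 h₂)).2, he]
  · intro κ₁ hκ₁ κ₂ hκ₂ hne
    refine disjoint_left.2 fun c hc₁ hc₂ => hne ?_
    obtain ⟨b₁, hb₁, rfl⟩ := mem_image.1 hc₁
    obtain ⟨b₂, hb₂, he⟩ := mem_image.1 hc₂
    rw [← (key_assemble_of_lt hij hκ₁ (mem_range.1 hb₁)).1,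
      ← (key_assemble_of_lt hij hκ₂ (mem_range.1 hb₂)).1, he]

theorem card_compress (hij : i ≠ j) (X : Finset (Multiset ℕ)) : #(compress i j X) = #X := by
  simp only [card_eq_sum_ones, sum_compress hij, sum_eq_sum_jDegrees (X := X) hij]
  simp

theorem card_eq_key (hij : i ≠ j) (m : Multiset ℕ) :
    Multiset.card m = Multiset.card (key i j m).1 + (key i j m).2 := by
  conv_lhs => rw [← assemble_key_count hij m]
  simp only [assemble, key, Multiset.card_add, Multiset.card_replicate]
  omega

theorem compress_subset_monomials (hij : i < j) (hjn : j < n)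
    (hX : X ⊆ monomials n d) : compress i j X ⊆ monomials n d := by
  intro c hc
  rw [mem_compress hij.ne] at hc
  obtain ⟨b, hb⟩ := card_pos.1 (Nat.zero_lt_of_lt hc)
  obtain ⟨w, hw, hkey, -⟩ := mem_jDegrees.1 hb
  obtain ⟨hcard, hlt⟩ := mem_monomials.1 (hX hw)
  refine mem_monomials.2 ⟨by rw [card_eq_key hij.ne, ← hkey, ← card_eq_key hij.ne, hcard], ?_⟩
  intro x hx
  by_cases hxij : x ≠ i ∧ x ≠ j
  · have hxw : x ∈ (key i j w).1 := by rw [hkey]; exact Multiset.mem_filter.2 ⟨hx, hxij⟩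
    exact hlt x (Multiset.mem_of_mem_filter hxw)
  · omega

theorem count_cons_mem_jDegrees_shadow {l : ℕ} {w c : Multiset ℕ} (hl : l < n) (hw : w ∈ X)
    (hkey : key i j w = key i j c) :
    (l ::ₘ w).count j ∈ jDegrees i j (shadow n X) (key i j (l ::ₘ c)) :=
  mem_jDegrees.2 ⟨l ::ₘ w, cons_mem_shadow hw hl, key_cons hkey, rfl⟩

theorem shadow_compress_subset (hij : i < j) (hjn : j < n) :
    shadow n (compress i j X) ⊆ compress i j (shadow n X) := by
  intro c' hc'
  obtain ⟨c, hc, l, hl, rfl⟩ := mem_shadow.1 hc'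
  rw [mem_compress hij.ne] at hc ⊢
  by_cases hlj : l = j
  · subst l
    set S := jDegrees i j X (key i j c)
    have hne : S.Nonempty := card_pos.1 (Nat.zero_lt_of_lt hc)
    have hsub : insert (S.max' hne + 1) S ⊆ jDegrees i j (shadow n X) (key i j (j ::ₘ c)) := by
      intro b hb
      rcases mem_insert.1 hb with rfl | hb
      · obtain ⟨w, hw, hkey, hcount⟩ := mem_jDegrees.1 (S.max'_mem hne)
        simpa [hcount] using count_cons_mem_jDegrees_shadow hjn hw hkey
      · obtain ⟨w, hw, hkey, rfl⟩ := mem_jDegrees.1 hb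
        have := count_cons_mem_jDegrees_shadow (hij.trans hjn) hw hkey
        rwa [key_cons_left, Multiset.count_cons_of_ne hij.ne'] at this
    have hmax : S.max' hne + 1 ∉ S := fun h => (S.le_max' _ h).not_gt (Nat.lt_succ_self _)
    have := card_le_card hsub
    rw [card_insert_of_notMem hmax] at this
    rw [Multiset.count_cons_self]
    omega
  · rw [Multiset.count_cons_of_ne (Ne.symm hlj)]
    refine hc.trans_le (card_le_card fun b hb => ?_)
    obtain ⟨w, hw, hkey, rfl⟩ := mem_jDegrees.1 hb
    simpa [Multiset.count_cons_of_ne (Ne.symm hlj)] using count_cons_mem_jDegrees_shadow hl hw hkey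

def weight (X : Finset (Multiset ℕ)) : ℕ := ∑ m ∈ X, m.sum

theorem sum_sum_assemble (hij : i ≤ j) {T : Finset ℕ} (hT : ∀ b ∈ T, b ≤ κ.2) :
    ∑ b ∈ T, (assemble i j κ b).sum = #T * (κ.1.sum + κ.2 * i) + (∑ b ∈ T, b) * (j - i) := by
  rw [card_eq_sum_ones, sum_mul, sum_mul, ← sum_add_distrib]
  refine sum_congr rfl fun b hb => ?_
  obtain ⟨t, ht⟩ := Nat.exists_eq_add_of_le (hT b hb)
  obtain ⟨u, rfl⟩ := Nat.exists_eq_add_of_le hij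
  simp only [assemble, Multiset.sum_add, Multiset.sum_replicate, smul_eq_mul, ht]
  rw [show b + t - b = t by omega, show i + u - i = u by omega]
  ring

theorem weight_compress_lt (hij : i < j) {m : Multiset ℕ} (hm : m ∈ X) (hjm : j ∈ m)
    (hnot : i ::ₘ m.erase j ∉ X) : weight (compress i j X) < weight X := by
  have hle (κ : Multiset ℕ × ℕ) : ∀ b ∈ range #(jDegrees i j X κ), b ≤ κ.2 := fun b hb =>
    Nat.lt_succ_iff.1 ((mem_range.1 hb).trans_le card_jDegrees_le)
  have hle' (κ : Multiset ℕ × ℕ) : ∀ b ∈ jDegrees i j X κ, b ≤ κ.2 := fun _ => le_of_mem_jDegrees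
  have hgap : jDegrees i j X (key i j m) ≠ range #(jDegrees i j X (key i j m)) := by
    intro heq
    have hmem : m.count j ∈ jDegrees i j X (key i j m) := mem_jDegrees.2 ⟨m, hm, rfl, rfl⟩
    have hpos := Multiset.count_pos.2 hjm
    have hpred : m.count j - 1 ∈ jDegrees i j X (key i j m) := by
      rw [heq, mem_range] at hmem ⊢
      omega
    obtain ⟨w, hw, hkey, hcount⟩ := mem_jDegrees.1 hpred
    apply hnot
    rwa [cons_erase_eq_assemble hij.ne hjm, ← hkey, ← hcount, assemble_key_count hij.ne]
  rw [weight, weight, sum_compress hij.ne, sum_eq_sum_jDegrees hij.ne]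
  refine sum_lt_sum (fun κ _ => ?_) ⟨key i j m, mem_image_of_mem _ hm, ?_⟩
  · rw [sum_sum_assemble hij.le (hle κ), sum_sum_assemble hij.le (hle' κ), card_range]
    exact Nat.add_le_add_left (Nat.mul_le_mul_right _ (sum_range_card_le_sum _)) _
  · rw [sum_sum_assemble hij.le (hle _), sum_sum_assemble hij.le (hle' _), card_range]
    exact Nat.add_lt_add_left
      (Nat.mul_lt_mul_of_pos_right (sum_range_card_lt_sum hgap) (Nat.sub_pos_of_lt hij)) _

end Compression

theorem multichoose_succ_le_card_shadow (hk : k ≤ d) (hB : B ⊆ monomials n d)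
    (hcard : n.multichoose k ≤ #B) : n.multichoose (k + 1) ≤ #(shadow n B) := by
  induction hw : weight B using Nat.strong_induction_on generalizing B with
  | _ w ih =>
  by_cases hstable : IsStronglyStable B
  · exact hstable.multichoose_succ_le_card_shadow hk hB hcard
  obtain ⟨m, hm, j, hjm, i, hij, hnot⟩ : ∃ m ∈ B, ∃ j ∈ m, ∃ i < j, i ::ₘ m.erase j ∉ B := by
    simpa [IsStronglyStable] using hstable
  have hjn : j < n := (mem_monomials.1 (hB hm)).2 j hjm
  calc n.multichoose (k + 1) ≤ #(shadow n (compress i j B)) :=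
        ih _ (hw ▸ weight_compress_lt hij hm hjm hnot) (compress_subset_monomials hij hjn hB)
          (by rwa [card_compress hij.ne]) rfl
    _ ≤ #(compress i j (shadow n B)) := card_le_card (shadow_compress_subset hij hjn)
    _ = #(shadow n B) := card_compress hij.ne _

end Macaulay

open MvPolynomial

namespace MonomialOrder

variable {σ K : Type*} [Field K] (m : MonomialOrder σ)

theorem linearIndependent_of_injective_degree {ι : Type*} {f : ι → MvPolynomial σ K}
    (hf : ∀ i, f i ≠ 0) (hinj : Function.Injective fun i => m.degree (f i)) :
    LinearIndependent K f := by
  classical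
  rw [linearIndependent_iff']
  intro s g hsum i hi
  by_contra hgi
  obtain ⟨i₀, hi₀, hmax⟩ := (s.filter (g · ≠ 0)).exists_max_image
    (fun i => m.toSyn (m.degree (f i))) ⟨i, mem_filter.2 ⟨hi, hgi⟩⟩
  obtain ⟨hi₀s, hgi₀⟩ := mem_filter.1 hi₀
  have hcoeff := congrArg (coeff (m.degree (f i₀))) hsum
  rw [coeff_sum, coeff_zero, sum_eq_single i₀] at hcoeff
  · simp [hgi₀, m.coeff_degree_ne_zero_iff.2 (hf i₀)] at hcoeff
  · intro b hb hne
    by_cases hgb : g b = 0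
    · simp [hgb]
    have hlt : m.degree (f b) ≺[m] m.degree (f i₀) :=
      lt_of_le_of_ne (hmax b (mem_filter.2 ⟨hb, hgb⟩)) fun h => hne (hinj (m.toSyn.injective h))
    simp [m.coeff_eq_zero_of_lt hlt]
  · exact fun h => absurd hi₀s h

theorem finrank_eq_card_of_degrees {V : Submodule K (MvPolynomial σ K)} {D : Finset (σ →₀ ℕ)}
    (hD : ∀ d, d ∈ D ↔ ∃ p ∈ V, p ≠ 0 ∧ m.degree p = d) : Module.finrank K V = #D := by
  let coeffs : V →ₗ[K] D → K := LinearMap.pi fun d => (lcoeff K d).comp V.subtype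
  have hcoeffs : Function.Injective coeffs := by
    rw [← LinearMap.ker_eq_bot, Submodule.eq_bot_iff]
    intro p hp
    by_contra hp0
    have hp0' : (p : MvPolynomial σ K) ≠ 0 := by simpa using hp0
    have hdeg := (hD _).2 ⟨p, p.2, hp0', rfl⟩
    exact m.coeff_degree_ne_zero_iff.2 hp0' (congrFun hp ⟨_, hdeg⟩)
  have : FiniteDimensional K V := Module.Finite.of_injective coeffs hcoeffs
  refine le_antisymm (by simpa using LinearMap.finrank_le_finrank_of_injective hcoeffs) ?_
  have hex (d : D) : ∃ p : V, (p : MvPolynomial σ K) ≠ 0 ∧ m.degree (p : MvPolynomial σ K) = d := by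
    obtain ⟨p, hpV, hp0, hpd⟩ := (hD d).1 d.2
    exact ⟨⟨p, hpV⟩, hp0, hpd⟩
  choose f hf0 hfdeg using hex
  have hli : LinearIndependent K f := LinearIndependent.of_comp V.subtype <|
    m.linearIndependent_of_injective_degree hf0 fun d₁ d₂ h => Subtype.ext <| by
      simpa [hfdeg] using h
  simpa using hli.fintype_card_le_finrank

end MonomialOrder

namespace Macaulay

variable {N : ℕ}

noncomputable def indexMultiset : (Fin N →₀ ℕ) ↪ Multiset ℕ where
  toFun d := d.toMultiset.map Fin.val
  inj' _ _ h := Finsupp.orderIsoMultiset.injective (Multiset.map_injective Fin.val_injective h)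

theorem indexMultiset_apply (d : Fin N →₀ ℕ) : indexMultiset d = d.toMultiset.map Fin.val := rfl

theorem indexMultiset_mem_monomials {d : Fin N →₀ ℕ} {e : ℕ} (hd : d.degree = e) :
    indexMultiset d ∈ monomials N e := by
  refine mem_monomials.2 ⟨?_, fun x hx => ?_⟩
  · rw [← hd, indexMultiset_apply, Multiset.card_map, Finsupp.card_toMultiset,
      Finsupp.degree_eq_sum, Finsupp.sum_fintype _ _ fun _ => rfl]
    rfl
  · obtain ⟨x, -, rfl⟩ := Multiset.mem_map.1 hx
    exact x.2

theorem indexMultiset_single_add (k : Fin N) (d : Fin N →₀ ℕ) :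
    indexMultiset (Finsupp.single k 1 + d) = (k : ℕ) ::ₘ indexMultiset d := by
  simp [indexMultiset_apply]

variable (I : Ideal (MvPolynomial (Fin N) ℂ))

theorem mem_idealComponent {p : MvPolynomial (Fin N) ℂ} {e : ℕ} :
    p ∈ idealComponent I e ↔ p ∈ I ∧ p.IsHomogeneous e := by
  have : idealComponent I e = I.restrictScalars ℂ ⊓ homogeneousSubmodule (Fin N) ℂ e := by
    rw [idealComponent, ← Submodule.span_eq (I.restrictScalars ℂ ⊓ _)]
    rfl
  rw [this, Submodule.mem_inf, Submodule.restrictScalars_mem, mem_homogeneousSubmodule]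

theorem degree_degree_of_mem_idealComponent {p : MvPolynomial (Fin N) ℂ} {e : ℕ}
    (hp : p ∈ idealComponent I e) (hp0 : p ≠ 0) : (MonomialOrder.lex.degree p).degree = e := by
  by_contra hne
  exact MonomialOrder.lex.coeff_degree_ne_zero_iff.2 hp0
    (((mem_idealComponent I).1 hp).2.coeff_eq_zero hne)

open scoped Classical in
noncomputable def leadingExponents (e : ℕ) : Finset (Fin N →₀ ℕ) :=
  (finsuppAntidiag univ e).filter fun d =>
    ∃ p ∈ idealComponent I e, p ≠ 0 ∧ MonomialOrder.lex.degree p = d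

open scoped Classical in
theorem mem_leadingExponents {e : ℕ} {d : Fin N →₀ ℕ} :
    d ∈ leadingExponents I e ↔
      ∃ p ∈ idealComponent I e, p ≠ 0 ∧ MonomialOrder.lex.degree p = d := by
  rw [leadingExponents, mem_filter]
  refine ⟨And.right, fun h => ⟨?_, h⟩⟩
  obtain ⟨p, hp, hp0, rfl⟩ := h
  simp [← Finsupp.degree_eq_sum, degree_degree_of_mem_idealComponent I hp hp0]

noncomputable def leadingMonomials (e : ℕ) : Finset (Multiset ℕ) :=
  (leadingExponents I e).map indexMultiset

theorem finrank_idealComponent_eq_card (e : ℕ) :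
    Module.finrank ℂ (idealComponent I e) = #(leadingMonomials I e) := by
  rw [leadingMonomials, card_map]
  exact MonomialOrder.lex.finrank_eq_card_of_degrees fun _ => mem_leadingExponents I

theorem leadingMonomials_subset_monomials (e : ℕ) : leadingMonomials I e ⊆ monomials N e := by
  intro c hc
  obtain ⟨d, hd, rfl⟩ := mem_map.1 hc
  obtain ⟨p, hp, hp0, rfl⟩ := (mem_leadingExponents I).1 hd
  exact indexMultiset_mem_monomials (degree_degree_of_mem_idealComponent I hp hp0)

theorem shadow_leadingMonomials_subset (e : ℕ) :
    shadow N (leadingMonomials I e) ⊆ leadingMonomials I (e + 1) := by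
  intro c' hc'
  obtain ⟨c, hc, k, hk, rfl⟩ := mem_shadow.1 hc'
  obtain ⟨d, hd, rfl⟩ := mem_map.1 hc
  obtain ⟨p, hp, hp0, rfl⟩ := (mem_leadingExponents I).1 hd
  obtain ⟨hpI, hph⟩ := (mem_idealComponent I).1 hp
  have hXp : X ⟨k, hk⟩ * p ∈ idealComponent I (e + 1) :=
    (mem_idealComponent I).2 ⟨I.mul_mem_left _ hpI, add_comm 1 e ▸ (isHomogeneous_X ℂ _).mul hph⟩
  refine mem_map.2 ⟨_, (mem_leadingExponents I).2 ⟨_, hXp, mul_ne_zero (X_ne_zero _) hp0, rfl⟩, ?_⟩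
  rw [MonomialOrder.lex.degree_mul (X_ne_zero _) hp0, MonomialOrder.lex.degree_X,
    indexMultiset_single_add]

end Macaulay

open Macaulay

theorem macaulay_corollary_general (N : ℕ) (I : Ideal (MvPolynomial (Fin N) ℂ))
    (d q : ℕ) (hqd : q < d)
    (h : Module.finrank ℂ (idealComponent I d) ≥ Nat.choose (N + d - q - 1) (d - q)) :
    ∀ τ : ℕ,
      Module.finrank ℂ (idealComponent I (d + τ)) ≥
        Nat.choose (N + τ + d - q - 1) (τ + d - q) := by
  have hgrowth (τ : ℕ) : N.multichoose (d - q + τ) ≤ #(leadingMonomials I (d + τ)) := by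
    induction τ with
    | zero =>
      rw [← finrank_idealComponent_eq_card, Nat.multichoose_eq]
      simpa [show N + (d - q) - 1 = N + d - q - 1 by omega] using h
    | succ τ ih =>
      calc N.multichoose (d - q + τ + 1) ≤ #(shadow N (leadingMonomials I (d + τ))) :=
            multichoose_succ_le_card_shadow (by omega) (leadingMonomials_subset_monomials I _) ih
        _ ≤ #(leadingMonomials I (d + τ + 1)) :=
            card_le_card (shadow_leadingMonomials_subset I _)
  intro τ
  rw [ge_iff_le, finrank_idealComponent_eq_card]
  convert hgrowth τ using 1
  rw [Nat.multichoose_eq]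
  congr 1 <;> omega

/-- **Corollary of Macaulay's theorem.** If `I ⊆ ℂ[x_1,…,x_N]` is a homogeneous ideal with
`dim I_d ≥ C(N+d−q−1, d−q)` for some `q < d`, then for every `τ ≥ 0`,
`dim I_{d+τ} ≥ C(N+τ+d−q−1, τ+d−q)`. -/
theorem macaulay_corollary (N : ℕ) (I : Ideal (MvPolynomial (Fin N) ℂ))
    (hI : ∀ p ∈ I, ∀ i : ℕ, MvPolynomial.homogeneousComponent i p ∈ I)
    (d q : ℕ) (hqd : q < d)
    (h : Module.finrank ℂ (idealComponent I d) ≥ Nat.choose (N + d - q - 1) (d - q)) :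
    ∀ τ : ℕ,
      Module.finrank ℂ (idealComponent I (d + τ)) ≥
        Nat.choose (N + τ + d - q - 1) (τ + d - q) :=
  macaulay_corollary_general N I d q hqd h
end

section
/- Let P and Q be homogeneous polynomials of degree n in ℂ[x_1,…,x_N], and suppose P is obtained from Q by a linear substitution of variables, i.e. P = Q ∘ A for some linear map A (each variable of Q is replaced by a linear form). Then for every k ≤ n and every τ ≥ 0, dim I^{P,k}_{n−k+τ} ≤ dim I^{Q,k}_{n−k+τ}. -/
/-- Iterated partial derivative with respect to a list of variables. -/
noncomputable def pderivList {σ : Type*} (L : List σ) (P : MvPolynomial σ ℂ) :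
    MvPolynomial σ ℂ :=
  L.foldr (fun i q => MvPolynomial.pderiv i q) P

/-- The span of all `M · ∂^k P/∂x^β` with `M` a monomial of degree `τ` and `|β| = k`, i.e.
the degree-`(deg P - k + τ)` graded component of the `k`-th Jacobian ideal of `P`. -/
noncomputable def shiftedPartialsSpan {σ : Type*} (P : MvPolynomial σ ℂ) (k τ : ℕ) :
    Submodule ℂ (MvPolynomial σ ℂ) :=
  Submodule.span ℂ
    { q | ∃ (L : List σ) (M : σ →₀ ℕ), L.length = k ∧ (M.sum fun _ e => e) = τ ∧
        q = MvPolynomial.monomial M (1 : ℂ) * pderivList L P }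

/-!
A linear substitution factors, through its coefficient matrix, as `U · D · V` with `U`, `V`
invertible and `D` the coordinate projection killing the variables outside a set `s`.

An invertible substitution `φ` with inverse `ψ` cannot increase the dimension: by the chain rule
the `k`-th partials of `Q ∘ φ` lie in `φ(∂^k Q)`, and `φ` maps degree-`τ` forms onto degree-`τ`
forms (every form `h` is `φ(ψ h)`), so the shifted partials of `Q ∘ φ` lie in the image under `φ`
of those of `Q`.

For the projection `π`, grade polynomials by the weight `w` counting the killed variables. Then
`π` is the weight-`0` component, and for a monomial `M` of weight `t` the product `M · π g` is the
weight-`t` component of `M · g`. Hence the shifted partials of `π Q` lie in the span of the weight-`t`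
components of the spaces `V_t = (degree-τ monomials of weight t) · ∂^k Q`. Since `V_t` has no
component of weight `< t`, these component spaces have total dimension at most `dim ∑ V_t`,
which is at most the dimension of the shifted partials of `Q`.
-/

open MvPolynomial Submodule
open Module (finrank)

namespace MvPolynomial

section WeightFiltration

variable (R : Type*) {σ : Type*} [CommSemiring R] (w : σ → ℕ)

noncomputable def weightFiltration (n : ℕ) : Submodule R (MvPolynomial σ R) :=
  restrictSupport R {d | n ≤ Finsupp.weight w d}

theorem weightFiltration_zero : weightFiltration R w 0 = ⊤ := by
  simp [weightFiltration]

theorem weightFiltration_mul_le (m n : ℕ) :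
    weightFiltration R w m * weightFiltration R w n ≤ weightFiltration R w (m + n) := by
  rw [weightFiltration, weightFiltration, ← restrictSupport_add]
  apply restrictSupport_mono
  rintro _ ⟨a, ha, b, hb, rfl⟩
  simp only [Set.mem_ofPred_eq, map_add] at *
  omega

variable {R w}

theorem IsWeightedHomogeneous.mem_weightFiltration {f : MvPolynomial σ R} {m : ℕ}
    (hf : IsWeightedHomogeneous w f m) : f ∈ weightFiltration R w m :=
  fun _ hd => (hf (mem_support_iff.mp hd)).ge

theorem weightedHomogeneousComponent_eq_zero_of_mem_weightFiltration {f : MvPolynomial σ R}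
    {n t : ℕ} (hf : f ∈ weightFiltration R w n) (ht : t < n) :
    weightedHomogeneousComponent w t f = 0 := by
  classical
  ext d
  rw [coeff_weightedHomogeneousComponent, coeff_zero, ite_eq_right_iff]
  intro hd
  by_contra hne
  have : n ≤ Finsupp.weight w d := hf (mem_support_iff.mpr hne)
  omega

theorem restrictSupport_mul_le_weightFiltration {S : Set (σ →₀ ℕ)} {t : ℕ}
    (hS : ∀ d ∈ S, t ≤ Finsupp.weight w d) (W : Submodule R (MvPolynomial σ R)) :
    restrictSupport R S * W ≤ weightFiltration R w t :=
  (mul_le_mul' (restrictSupport_mono R hS) (le_top.trans (weightFiltration_zero R w).ge)).trans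
    (weightFiltration_mul_le R w t 0)

end WeightFiltration

section WeightComponents

variable {R σ : Type*} [CommRing R] {w : σ → ℕ}

theorem sub_weightedHomogeneousComponent_zero_mem_weightFiltration (f : MvPolynomial σ R) :
    f - weightedHomogeneousComponent w 0 f ∈ weightFiltration R w 1 := by
  classical
  rw [weightFiltration, mem_restrictSupport_iff]
  intro d hd
  rw [Set.mem_ofPred_eq, Nat.one_le_iff_ne_zero]
  intro h
  rw [Finset.mem_coe, mem_support_iff, coeff_sub, coeff_weightedHomogeneousComponent, if_pos h,
    sub_self] at hd
  exact hd rfl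

theorem IsWeightedHomogeneous.weightedHomogeneousComponent_mul {f : MvPolynomial σ R} {m : ℕ}
    (hf : IsWeightedHomogeneous w f m) (g : MvPolynomial σ R) :
    weightedHomogeneousComponent w m (f * g) = f * weightedHomogeneousComponent w 0 g := by
  have hlow : IsWeightedHomogeneous w (f * weightedHomogeneousComponent w 0 g) m := by
    simpa using hf.mul (weightedHomogeneousComponent_isWeightedHomogeneous 0 g)
  have hhigh : f * (g - weightedHomogeneousComponent w 0 g) ∈ weightFiltration R w (m + 1) :=
    weightFiltration_mul_le R w m 1 <| mul_mem_mul hf.mem_weightFiltration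
      (sub_weightedHomogeneousComponent_zero_mem_weightFiltration g)
  calc weightedHomogeneousComponent w m (f * g)
      = weightedHomogeneousComponent w m (f * weightedHomogeneousComponent w 0 g) +
          weightedHomogeneousComponent w m (f * (g - weightedHomogeneousComponent w 0 g)) := by
        rw [← map_add, ← mul_add, add_sub_cancel]
    _ = f * weightedHomogeneousComponent w 0 g := by
      rw [hlow.weightedHomogeneousComponent_same,
        weightedHomogeneousComponent_eq_zero_of_mem_weightFiltration hhigh (by omega), add_zero]

theorem weightedHomogeneousComponent_zero_mul (f g : MvPolynomial σ R) :
    weightedHomogeneousComponent w 0 (f * g) =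
      weightedHomogeneousComponent w 0 f * weightedHomogeneousComponent w 0 g := by
  have hhigh : (f - weightedHomogeneousComponent w 0 f) * g ∈ weightFiltration R w (1 + 0) :=
    weightFiltration_mul_le R w 1 0 <| mul_mem_mul
      (sub_weightedHomogeneousComponent_zero_mem_weightFiltration f)
      (weightFiltration_zero R w ▸ mem_top)
  calc weightedHomogeneousComponent w 0 (f * g)
      = weightedHomogeneousComponent w 0 (weightedHomogeneousComponent w 0 f * g) +
          weightedHomogeneousComponent w 0 ((f - weightedHomogeneousComponent w 0 f) * g) := by
        rw [← map_add, ← add_mul, add_sub_cancel]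
    _ = _ := by
      rw [(weightedHomogeneousComponent_isWeightedHomogeneous 0 f).weightedHomogeneousComponent_mul,
        weightedHomogeneousComponent_eq_zero_of_mem_weightFiltration hhigh (by omega), add_zero]

theorem aeval_indicator_X (s : Set σ) (f : MvPolynomial σ R) :
    aeval (s.indicator X) f = weightedHomogeneousComponent (sᶜ.indicator (1 : σ → ℕ)) 0 f := by
  induction f using MvPolynomial.induction_on with
  | C a =>
    rw [aeval_C, algebraMap_eq, (isWeightedHomogeneous_C _ a).weightedHomogeneousComponent_same]
  | add p q hp hq => rw [map_add, map_add, hp, hq]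
  | mul_X p i hp =>
    rw [map_mul, weightedHomogeneousComponent_zero_mul, hp, aeval_X]
    congr 1
    have hX := isWeightedHomogeneous_X R (sᶜ.indicator (1 : σ → ℕ)) i
    by_cases hi : i ∈ s
    · rw [Set.indicator_of_notMem (Set.notMem_compl_iff.mpr hi)] at hX
      rw [Set.indicator_of_mem hi, hX.weightedHomogeneousComponent_same]
    · rw [Set.indicator_of_mem (Set.mem_compl hi)] at hX
      rw [Set.indicator_of_notMem hi, hX.weightedHomogeneousComponent_ne _ (by simp)]

theorem restrictSupport_mul_map_aeval_indicator_X_le (s : Set σ)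
    (W : Submodule R (MvPolynomial σ R)) {S : Set (σ →₀ ℕ)} {t : ℕ}
    (hS : ∀ d ∈ S, Finsupp.weight (sᶜ.indicator 1) d = t) :
    restrictSupport R S * W.map (aeval (s.indicator X)).toLinearMap ≤
      (restrictSupport R S * W).map (weightedHomogeneousComponent (sᶜ.indicator 1) t) := by
  rw [Submodule.mul_le]
  rintro h hh _ ⟨g, hg, rfl⟩
  have hw : IsWeightedHomogeneous (sᶜ.indicator 1) h t :=
    fun d hd => hS d (hh (mem_support_iff.mpr hd))
  rw [AlgHom.toLinearMap_apply, aeval_indicator_X, ← hw.weightedHomogeneousComponent_mul]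
  exact mem_map_of_mem (mul_mem_mul hh hg)

end WeightComponents

end MvPolynomial

section TriangularDimension

variable {K V V' : Type*} [DivisionRing K] [AddCommGroup V] [Module K V] [AddCommGroup V']
  [Module K V']

theorem finrank_map_add_finrank_le_finrank_sup (f : V →ₗ[K] V') (A B : Submodule K V)
    [FiniteDimensional K A] [FiniteDimensional K B] (hB : B ≤ LinearMap.ker f) :
    finrank K (A.map f) + finrank K B ≤ finrank K ↥(A ⊔ B) := by
  have hrank := LinearMap.finrank_range_add_finrank_ker (f.domRestrict (A ⊔ B))
  have hBf : B.map f = ⊥ := by rwa [eq_bot_iff, map_le_iff_le_comap, comap_bot]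
  rw [LinearMap.range_domRestrict, LinearMap.ker_domRestrict, Submodule.map_sup, hBf,
    sup_bot_eq] at hrank
  have hker : finrank K B ≤ finrank K (comap (A ⊔ B).subtype (LinearMap.ker f)) := by
    rw [← (comapSubtypeEquivOfLe (le_sup_right : B ≤ A ⊔ B)).finrank_eq]
    exact finrank_mono (comap_mono hB)
  omega

theorem finrank_finset_sup_le_sum {ι : Type*} (s : Finset ι) (W : ι → Submodule K V)
    [∀ i, FiniteDimensional K (W i)] :
    finrank K ↥(s.sup W) ≤ ∑ i ∈ s, finrank K (W i) := by
  classical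
  induction s using Finset.induction_on with
  | empty => simp
  | insert i s hi ih =>
    rw [Finset.sup_insert, Finset.sum_insert hi]
    exact (finrank_add_le_finrank_add_finrank _ _).trans (Nat.add_le_add_left ih _)

theorem sum_finrank_map_le_finrank_finset_sup (π : ℕ → V →ₗ[K] V') (W : ℕ → Submodule K V)
    [∀ t, FiniteDimensional K (W t)] (hW : ∀ u t, u < t → W t ≤ LinearMap.ker (π u)) (m : ℕ) :
    ∑ t ∈ Finset.range m, finrank K ((W t).map (π t)) ≤
      finrank K ↥((Finset.range m).sup W) := by
  -- The extra summand `B` lets the induction step absorb `W m` into it.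
  suffices h : ∀ B : Submodule K V, FiniteDimensional K B → (∀ u < m, B ≤ LinearMap.ker (π u)) →
      ∑ t ∈ Finset.range m, finrank K ((W t).map (π t)) + finrank K B ≤
        finrank K ↥(B ⊔ (Finset.range m).sup W) by
    have hbot := h ⊥ inferInstance fun _ _ => bot_le
    rwa [finrank_bot, add_zero, bot_sup_eq] at hbot
  induction m with
  | zero =>
    intro B _ _
    rw [Finset.range_zero, Finset.sup_empty, sup_bot_eq, Finset.sum_empty, zero_add]
  | succ m ih =>
    intro B _ hB
    have hrest := ih (W m ⊔ B) inferInstance fun u hu => sup_le (hW u m hu) (hB u (by omega))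
    have htop := finrank_map_add_finrank_le_finrank_sup (π m) (W m) B (hB m (by omega))
    rw [Finset.sum_range_succ, Finset.range_add_one, Finset.sup_insert, ← sup_assoc, sup_comm B]
    omega

end TriangularDimension

theorem Finsupp.weight_le_degree {σ : Type*} {w : σ → ℕ} (hw : ∀ i, w i ≤ 1) (d : σ →₀ ℕ) :
    Finsupp.weight w d ≤ d.degree := by
  rw [Finsupp.weight_apply, Finsupp.degree_apply, Finsupp.sum]
  exact Finset.sum_le_sum fun i _ => by simpa using Nat.mul_le_mul_left (d i) (hw i)

theorem Matrix.exists_eq_mul_diagonal_indicator_mul {K n : Type*} [Field K] [Fintype n]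
    [DecidableEq n] (M : Matrix n n K) :
    ∃ (U V : Matrix n n K) (s : Set n),
      IsUnit U.det ∧ IsUnit V.det ∧ M = U * diagonal (s.indicator 1) * V := by
  classical
  obtain ⟨L, L', D, hM⟩ := Pivot.exists_list_transvec_mul_diagonal_mul_list_transvec M
  refine ⟨(L.map TransvectionStruct.toMatrix).prod * diagonal fun i => if D i = 0 then 1 else D i,
    (L'.map TransvectionStruct.toMatrix).prod, {i | D i ≠ 0}, ?_, ?_, ?_⟩
  · rw [det_mul, TransvectionStruct.det_toMatrix_prod, one_mul, det_diagonal, isUnit_iff_ne_zero,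
      Finset.prod_ne_zero_iff]
    intro i _
    split_ifs with h
    exacts [one_ne_zero, h]
  · rw [TransvectionStruct.det_toMatrix_prod]
    exact isUnit_one
  · rw [hM, Matrix.mul_assoc (L.map _).prod (diagonal _) (diagonal _), diagonal_mul_diagonal]
    congr
    funext i
    by_cases h : D i = 0 <;> simp [h]

namespace MvPolynomial

theorem pderiv_aeval {R σ τ : Type*} [CommSemiring R] [Fintype σ] (A : σ → MvPolynomial τ R)
    (i : τ) (f : MvPolynomial σ R) :
    pderiv i (aeval A f) = ∑ j, pderiv i (A j) * aeval A (pderiv j f) := by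
  classical
  induction f using MvPolynomial.induction_on with
  | C a => simp
  | add p q hp hq => simp only [map_add, hp, hq, mul_add, Finset.sum_add_distrib]
  | mul_X p l hp =>
    simp only [map_mul, aeval_X, Derivation.leibniz, smul_eq_mul, map_add, hp, pderiv_X,
      Pi.single_apply, mul_add, Finset.sum_add_distrib, apply_ite (aeval A), map_zero,
      mul_ite, mul_one, mul_zero, Finset.sum_ite_eq, Finset.mem_univ, if_true, Finset.mul_sum,
      mul_left_comm (A l)]
    ring

variable {R σ : Type*} [CommSemiring R]

theorem homogeneousSubmodule_eq_restrictSupport (n : ℕ) :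
    homogeneousSubmodule σ R n = restrictSupport R {d | d.degree = n} := by
  rw [homogeneousSubmodule_eq_finsupp_supported]
  rfl

theorem homogeneousSubmodule_le_iSup_restrictSupport {w : σ → ℕ} (hw : ∀ i, w i ≤ 1) (n : ℕ) :
    homogeneousSubmodule σ R n ≤
      ⨆ t ∈ Finset.range (n + 1),
        restrictSupport R {d | d.degree = n ∧ Finsupp.weight w d = t} := by
  rw [homogeneousSubmodule_eq_restrictSupport, restrictSupport_eq_span, span_le]
  rintro _ ⟨d, hd, rfl⟩
  have hdn : Finsupp.weight w d ∈ Finset.range (n + 1) :=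
    Finset.mem_range_succ_iff.mpr ((Finsupp.weight_le_degree hw d).trans_eq hd)
  exact le_iSup₂ (f := fun t _ => restrictSupport R {d | d.degree = n ∧ Finsupp.weight w d = t})
    _ hdn (by simpa using Or.inl hd)

theorem map_aeval_homogeneousSubmodule_le {A : σ → MvPolynomial σ R}
    (hA : ∀ j, (A j).IsHomogeneous 1) (n : ℕ) :
    (homogeneousSubmodule σ R n).map (aeval A).toLinearMap ≤ homogeneousSubmodule σ R n := by
  rintro _ ⟨f, hf, rfl⟩
  simpa using (mem_homogeneousSubmodule n f |>.mp hf).aeval A hA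

theorem isHomogeneous_indicator_X (s : Set σ) (j : σ) :
    (s.indicator (X : σ → MvPolynomial σ R) j).IsHomogeneous 1 := by
  by_cases hj : j ∈ s
  · simpa [hj] using isHomogeneous_X R j
  · simpa [hj] using isHomogeneous_zero σ R 1

variable [Fintype σ]

theorem pderiv_aeval_mem_span {A : σ → MvPolynomial σ R} (hA : ∀ j, (A j).IsHomogeneous 1)
    (i : σ) (f : MvPolynomial σ R) :
    pderiv i (aeval A f) ∈ span R (Set.range fun j => aeval A (pderiv j f)) := by
  rw [pderiv_aeval]
  refine sum_mem fun j _ => ?_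
  have hconst : pderiv i (A j) = C (coeff 0 (pderiv i (A j))) :=
    totalDegree_eq_zero_iff_eq_C.mp ((totalDegree_zero_iff_isHomogeneous σ).mpr (hA j).pderiv)
  rw [hconst, C_mul']
  exact smul_mem _ _ (subset_span ⟨j, rfl⟩)

noncomputable def linearSubst (m : Matrix σ σ R) : σ → MvPolynomial σ R :=
  fun j => ∑ i, m i j • X i

theorem isHomogeneous_linearSubst (m : Matrix σ σ R) (j : σ) :
    (linearSubst m j).IsHomogeneous 1 :=
  IsHomogeneous.sum _ _ _ fun i _ => by
    rw [smul_eq_C_mul]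
    exact isHomogeneous_C_mul_X _ i

theorem exists_linearSubst_eq {A : σ → MvPolynomial σ R} (hA : ∀ j, (A j).IsHomogeneous 1) :
    ∃ m : Matrix σ σ R, linearSubst m = A := by
  have hspan j : A j ∈ span R (Set.range X) := by
    rw [← homogeneousSubmodule_one_eq_span_X]
    exact hA j
  choose c hc using fun j => (mem_span_range_iff_exists_fun R).mp (hspan j)
  exact ⟨fun i j => c j i, _root_.funext hc⟩

theorem aeval_linearSubst_aeval_linearSubst (m m' : Matrix σ σ R) (f : MvPolynomial σ R) :
    aeval (linearSubst m) (aeval (linearSubst m') f) = aeval (linearSubst (m * m')) f := by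
  rw [comp_aeval_apply]
  congr 1
  ext1 j
  simp only [linearSubst, map_sum, map_smul, aeval_X, Finset.smul_sum, smul_smul, Matrix.mul_apply,
    Finset.sum_smul]
  rw [Finset.sum_comm]
  simp_rw [mul_comm]

theorem linearSubst_one [DecidableEq σ] : linearSubst (1 : Matrix σ σ R) = X := by
  funext j
  simp [linearSubst, Matrix.one_apply]

theorem linearSubst_diagonal_indicator [DecidableEq σ] (s : Set σ) :
    linearSubst (Matrix.diagonal (s.indicator 1)) = s.indicator (X : σ → MvPolynomial σ R) := by
  funext j
  by_cases hj : j ∈ s <;> simp [linearSubst, Matrix.diagonal_apply, hj]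

end MvPolynomial

section ShiftedPartials

variable {σ : Type*}

noncomputable def partialsSpan (P : MvPolynomial σ ℂ) (k : ℕ) : Submodule ℂ (MvPolynomial σ ℂ) :=
  span ℂ ((pderivList · P) '' {L | L.length = k})

theorem pderiv_mem_partialsSpan_succ {P f : MvPolynomial σ ℂ} {k : ℕ}
    (hf : f ∈ partialsSpan P k) (i : σ) : pderiv i f ∈ partialsSpan P (k + 1) := by
  have hmap : (partialsSpan P k).map (pderiv i).toLinearMap ≤ partialsSpan P (k + 1) := by
    rw [partialsSpan, map_span, span_le]
    rintro _ ⟨_, ⟨L, hL, rfl⟩, rfl⟩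
    exact subset_span ⟨i :: L, by simpa using hL, rfl⟩
  exact hmap (mem_map_of_mem hf)

theorem shiftedPartialsSpan_eq_homogeneousSubmodule_mul (P : MvPolynomial σ ℂ) (k τ : ℕ) :
    shiftedPartialsSpan P k τ = homogeneousSubmodule σ ℂ τ * partialsSpan P k := by
  rw [homogeneousSubmodule_eq_restrictSupport, restrictSupport_eq_span, partialsSpan,
    span_mul_span, shiftedPartialsSpan]
  congr 1
  ext q
  simp only [Set.mem_mul, Set.mem_image, Set.mem_ofPred_eq]
  constructor
  · rintro ⟨L, M, hL, hM, rfl⟩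
    exact ⟨_, ⟨M, hM, rfl⟩, _, ⟨L, hL, rfl⟩, rfl⟩
  · rintro ⟨_, ⟨M, hM, rfl⟩, _, ⟨L, hL, rfl⟩, rfl⟩
    exact ⟨L, M, hL, hM, rfl⟩

instance [Finite σ] (P : MvPolynomial σ ℂ) (k τ : ℕ) :
    FiniteDimensional ℂ (shiftedPartialsSpan P k τ) := by
  rw [shiftedPartialsSpan_eq_homogeneousSubmodule_mul]
  exact Module.Finite.iff_fg.mpr <| (homogeneousSubmodule_fg σ ℂ τ).mul
    (fg_span ((List.finite_length_eq σ k).image _))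

variable [Fintype σ]

theorem partialsSpan_aeval_le {A : σ → MvPolynomial σ ℂ} (hA : ∀ j, (A j).IsHomogeneous 1)
    (P : MvPolynomial σ ℂ) (k : ℕ) :
    partialsSpan (aeval A P) k ≤ (partialsSpan P k).map (aeval A).toLinearMap := by
  suffices h : ∀ L : List σ,
      pderivList L (aeval A P) ∈ (partialsSpan P L.length).map (aeval A).toLinearMap by
    rw [partialsSpan, span_le]
    rintro _ ⟨L, rfl, rfl⟩
    exact h L
  intro L
  induction L with
  | nil => exact mem_map_of_mem (subset_span ⟨[], rfl, rfl⟩)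
  | cons i L ih =>
    obtain ⟨f, hf, hfL⟩ := mem_map.mp ih
    rw [AlgHom.toLinearMap_apply] at hfL
    change pderiv i (pderivList L (aeval A P)) ∈ _
    rw [← hfL]
    refine span_le.mpr ?_ (pderiv_aeval_mem_span hA i f)
    rintro _ ⟨j, rfl⟩
    exact mem_map_of_mem (pderiv_mem_partialsSpan_succ hf j)

theorem finrank_shiftedPartialsSpan_aeval_le_of_aeval_eq_X {A B : σ → MvPolynomial σ ℂ}
    (hA : ∀ j, (A j).IsHomogeneous 1) (hB : ∀ j, (B j).IsHomogeneous 1)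
    (hAB : ∀ j, aeval A (B j) = X j) (P : MvPolynomial σ ℂ) (k τ : ℕ) :
    finrank ℂ (shiftedPartialsSpan (aeval A P) k τ) ≤ finrank ℂ (shiftedPartialsSpan P k τ) := by
  have hH :
      homogeneousSubmodule σ ℂ τ ≤ (homogeneousSubmodule σ ℂ τ).map (aeval A).toLinearMap := by
    intro h hh
    refine ⟨aeval B h, map_aeval_homogeneousSubmodule_le hB τ ⟨h, hh, rfl⟩, ?_⟩
    rw [AlgHom.toLinearMap_apply, comp_aeval_apply, _root_.funext hAB, aeval_X_left_apply]
  have hle : shiftedPartialsSpan (aeval A P) k τ ≤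
      (shiftedPartialsSpan P k τ).map (aeval A).toLinearMap := by
    rw [shiftedPartialsSpan_eq_homogeneousSubmodule_mul,
      shiftedPartialsSpan_eq_homogeneousSubmodule_mul, Submodule.map_mul]
    exact mul_le_mul' hH (partialsSpan_aeval_le hA P k)
  exact (finrank_mono hle).trans (finrank_map_le _ _)

theorem finrank_shiftedPartialsSpan_aeval_linearSubst_le [DecidableEq σ] {U : Matrix σ σ ℂ}
    (hU : IsUnit U.det) (P : MvPolynomial σ ℂ) (k τ : ℕ) :
    finrank ℂ (shiftedPartialsSpan (aeval (linearSubst U) P) k τ) ≤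
      finrank ℂ (shiftedPartialsSpan P k τ) :=
  finrank_shiftedPartialsSpan_aeval_le_of_aeval_eq_X (isHomogeneous_linearSubst U)
    (isHomogeneous_linearSubst U⁻¹) (fun j => by
      rw [← aeval_X (R := ℂ) (linearSubst U⁻¹) j, aeval_linearSubst_aeval_linearSubst,
        Matrix.mul_nonsing_inv U hU, linearSubst_one, aeval_X]) P k τ

theorem finrank_shiftedPartialsSpan_aeval_indicator_X_le (s : Set σ) (P : MvPolynomial σ ℂ)
    (k τ : ℕ) :
    finrank ℂ (shiftedPartialsSpan (aeval (s.indicator X) P) k τ) ≤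
      finrank ℂ (shiftedPartialsSpan P k τ) := by
  set w : σ → ℕ := sᶜ.indicator 1
  set π := aeval (R := ℂ) (s.indicator (X : σ → MvPolynomial σ ℂ))
  let H : ℕ → Submodule ℂ (MvPolynomial σ ℂ) := fun t =>
    restrictSupport ℂ {d | d.degree = τ ∧ Finsupp.weight w d = t}
  let V : ℕ → Submodule ℂ (MvPolynomial σ ℂ) := fun t => H t * partialsSpan P k
  have hV t : V t ≤ shiftedPartialsSpan P k τ := by
    rw [shiftedPartialsSpan_eq_homogeneousSubmodule_mul, homogeneousSubmodule_eq_restrictSupport]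
    exact mul_le_mul' (restrictSupport_mono ℂ fun d hd => hd.1) le_rfl
  have : ∀ t, FiniteDimensional ℂ (V t) := fun t => Submodule.finiteDimensional_of_le (hV t)
  have hkill u t (hut : u < t) : V t ≤ LinearMap.ker (weightedHomogeneousComponent w u) :=
    fun f hf => weightedHomogeneousComponent_eq_zero_of_mem_weightFiltration
      (restrictSupport_mul_le_weightFiltration (fun d hd => hd.2.ge) _ hf) hut
  have hcover : shiftedPartialsSpan (π P) k τ ≤
      (Finset.range (τ + 1)).sup fun t => (V t).map (weightedHomogeneousComponent w t) := by
    rw [shiftedPartialsSpan_eq_homogeneousSubmodule_mul, Finset.sup_eq_iSup]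
    calc _ ≤ homogeneousSubmodule σ ℂ τ * (partialsSpan P k).map π.toLinearMap :=
          mul_le_mul' le_rfl (partialsSpan_aeval_le (isHomogeneous_indicator_X s) P k)
      _ ≤ (⨆ t ∈ Finset.range (τ + 1), H t) * (partialsSpan P k).map π.toLinearMap :=
          mul_le_mul' (homogeneousSubmodule_le_iSup_restrictSupport
            (fun i => Set.indicator_le_self' (fun _ _ => zero_le_one) i) τ) le_rfl
      _ = ⨆ t ∈ Finset.range (τ + 1), H t * (partialsSpan P k).map π.toLinearMap := by
          simp only [iSup_mul]
      _ ≤ _ := iSup₂_mono fun t _ =>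
          restrictSupport_mul_map_aeval_indicator_X_le s _ fun _ hd => hd.2
  calc finrank ℂ (shiftedPartialsSpan (π P) k τ)
      ≤ finrank ℂ ↥((Finset.range (τ + 1)).sup fun t =>
          (V t).map (weightedHomogeneousComponent w t)) := finrank_mono hcover
    _ ≤ ∑ t ∈ Finset.range (τ + 1), finrank ℂ ((V t).map (weightedHomogeneousComponent w t)) :=
        finrank_finset_sup_le_sum _ _
    _ ≤ finrank ℂ ↥((Finset.range (τ + 1)).sup V) :=
        sum_finrank_map_le_finrank_finset_sup _ V hkill _
    _ ≤ finrank ℂ (shiftedPartialsSpan P k τ) := finrank_mono (Finset.sup_le fun t _ => hV t)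

end ShiftedPartials

theorem shifted_partials_mono_under_substitution_general (N n : ℕ)
    (P Q : MvPolynomial (Fin N) ℂ)
    (A : Fin N → MvPolynomial (Fin N) ℂ) (hA : ∀ i, (A i).IsHomogeneous 1)
    (hPQ : P = MvPolynomial.aeval A Q) :
    ∀ k ≤ n, ∀ τ : ℕ,
      Module.finrank ℂ (shiftedPartialsSpan P k τ) ≤
        Module.finrank ℂ (shiftedPartialsSpan Q k τ) := by
  intro k _ τ
  obtain ⟨M, rfl⟩ := exists_linearSubst_eq hA
  obtain ⟨U, V, s, hU, hV, rfl⟩ := M.exists_eq_mul_diagonal_indicator_mul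
  rw [hPQ, ← aeval_linearSubst_aeval_linearSubst, ← aeval_linearSubst_aeval_linearSubst,
    linearSubst_diagonal_indicator]
  calc _ ≤ finrank ℂ (shiftedPartialsSpan (aeval (s.indicator X) (aeval (linearSubst V) Q)) k τ) :=
        finrank_shiftedPartialsSpan_aeval_linearSubst_le hU _ k τ
    _ ≤ finrank ℂ (shiftedPartialsSpan (aeval (linearSubst V) Q) k τ) :=
        finrank_shiftedPartialsSpan_aeval_indicator_X_le s _ k τ
    _ ≤ _ := finrank_shiftedPartialsSpan_aeval_linearSubst_le hV Q k τ

/-- If `P` is obtained from `Q` by a linear substitution of variables (each variable of `Q`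
replaced by a linear form), then the shifted partial derivative spaces of `P` are at most as
large as those of `Q`: for every `k ≤ n` and `τ ≥ 0`,
`dim I^{P,k}_{n−k+τ} ≤ dim I^{Q,k}_{n−k+τ}`. -/
theorem shifted_partials_mono_under_substitution (N n : ℕ)
    (P Q : MvPolynomial (Fin N) ℂ)
    (hP : P.IsHomogeneous n) (hQ : Q.IsHomogeneous n)
    (A : Fin N → MvPolynomial (Fin N) ℂ) (hA : ∀ i, (A i).IsHomogeneous 1)
    (hPQ : P = MvPolynomial.aeval A Q) :
    ∀ k ≤ n, ∀ τ : ℕ,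
      Module.finrank ℂ (shiftedPartialsSpan P k τ) ≤
        Module.finrank ℂ (shiftedPartialsSpan Q k τ) :=
  shifted_partials_mono_under_substitution_general N n P Q A hA hPQ
end

section
/- Let ℓ = x_N be a variable of ℂ[x_1,…,x_N] and let P be a homogeneous polynomial of degree m in the remaining variables x_1,…,x_{N−1}. Let n > m and set F = ℓ^{n−m}·P. Then for every k < n−m, every k-th order partial derivative of F is divisible by ℓ^{n−m−k}; consequently, for every τ ≥ 0, dim I^{F,k}_{n−k+τ} ≤ C(N+m+τ−1, m+τ). -/
/-! The product rule gives `∂ᵢ (X ^ (e + 1) * Q) = X ^ e * G` with `G` homogeneous of the same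
degree as `Q`; iterating, every generator `M * ∂^β F` of the span is `X_N ^ (n - m - k)` times a
form of degree `τ + m`. The span therefore lies in the image, under multiplication by
`X_N ^ (n - m - k)`, of the space of forms of degree `τ + m`, whose dimension is the number of
monomials of that degree. -/

namespace MvPolynomial

variable {σ R : Type*} [CommSemiring R]

theorem IsHomogeneous.X_mul_pderiv {φ : MvPolynomial σ R} {n : ℕ} (h : φ.IsHomogeneous n)
    (i j : σ) : (X j * pderiv i φ).IsHomogeneous n := by
  rcases n with _ | n
  · rw [← totalDegree_zero_iff_isHomogeneous, totalDegree_eq_zero_iff_eq_C] at h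
    rw [h, pderiv_C, mul_zero]
    exact isHomogeneous_zero _ _ _
  · simpa [add_comm] using (isHomogeneous_X R j).mul h.pderiv

theorem exists_pderiv_X_pow_succ_mul {Q : MvPolynomial σ R} {d : ℕ} (hQ : Q.IsHomogeneous d)
    (i l : σ) (e : ℕ) :
    ∃ G : MvPolynomial σ R, G.IsHomogeneous d ∧
      pderiv i (X l ^ (e + 1) * Q) = X l ^ e * G := by
  refine ⟨C ((e + 1 : ℕ) : R) * (pderiv i (X l) * Q) + X l * pderiv i Q, ?_, ?_⟩
  · have h := (isHomogeneous_X R l).pderiv (i := i) |>.mul hQ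
    rw [Nat.sub_self, zero_add] at h
    exact (h.C_mul _).add (hQ.X_mul_pderiv i l)
  · rw [pderiv_mul, pderiv_pow, map_natCast]
    push_cast
    ring

theorem finrank_homogeneousSubmodule [Fintype σ] {K : Type*} [Field K] (n : ℕ) :
    Module.finrank K (homogeneousSubmodule σ K n) = (Fintype.card σ + n - 1).choose n := by
  classical
  rw [homogeneousSubmodule_eq_finsupp_supported]
  have := (Finsupp.finite_of_degree_eq (σ := σ) n).fintype
  rw [← Sym.card_sym_eq_choose]
  exact (Module.finrank_eq_card_basis
    (basisRestrictSupport K {d : σ →₀ ℕ | d.degree = n})).trans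
    (Fintype.card_congr (Sym.equivNatSum σ n).symm)

end MvPolynomial

open MvPolynomial

theorem exists_pderivList_X_pow_mul {σ : Type*} {Q : MvPolynomial σ ℂ} {d : ℕ}
    (hQ : Q.IsHomogeneous d) (l : σ) {e : ℕ} (L : List σ) (hL : L.length ≤ e) :
    ∃ G : MvPolynomial σ ℂ, G.IsHomogeneous d ∧
      pderivList L (X l ^ e * Q) = X l ^ (e - L.length) * G := by
  induction L with
  | nil => exact ⟨Q, hQ, rfl⟩
  | cons i L ih =>
    rw [List.length_cons] at hL ⊢
    obtain ⟨G, hG, hLG⟩ := ih (by omega)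
    obtain ⟨G', hG', hiG⟩ := exists_pderiv_X_pow_succ_mul hG i l (e - (L.length + 1))
    refine ⟨G', hG', ?_⟩
    rw [← hiG, ← Nat.sub_add_comm hL, Nat.add_sub_add_right, ← hLG]
    rfl

theorem shiftedPartialsSpan_le_map_mulLeft {σ : Type*} {F c : MvPolynomial σ ℂ} {k d : ℕ}
    (hF : ∀ L : List σ, L.length = k → ∃ G, G.IsHomogeneous d ∧ pderivList L F = c * G)
    (τ : ℕ) :
    shiftedPartialsSpan F k τ ≤
      (homogeneousSubmodule σ ℂ (τ + d)).map (LinearMap.mulLeft ℂ c) := by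
  rw [shiftedPartialsSpan, Submodule.span_le]
  rintro _ ⟨L, M, hL, hM, rfl⟩
  obtain ⟨G, hG, hLG⟩ := hF L hL
  refine ⟨monomial M 1 * G, (isHomogeneous_monomial _ hM).mul hG, ?_⟩
  rw [LinearMap.mulLeft_apply, hLG]
  ring

theorem finrank_shiftedPartialsSpan_le {σ : Type*} [Fintype σ] {F c : MvPolynomial σ ℂ}
    {k d : ℕ}
    (hF : ∀ L : List σ, L.length = k → ∃ G, G.IsHomogeneous d ∧ pderivList L F = c * G)
    (τ : ℕ) :
    Module.finrank ℂ (shiftedPartialsSpan F k τ) ≤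
      (Fintype.card σ + (τ + d) - 1).choose (τ + d) := by
  have : Module.Finite ℂ (homogeneousSubmodule σ ℂ (τ + d)) :=
    Module.Finite.iff_fg.mpr (homogeneousSubmodule_fg σ ℂ _)
  calc Module.finrank ℂ (shiftedPartialsSpan F k τ)
      ≤ Module.finrank ℂ
          ((homogeneousSubmodule σ ℂ (τ + d)).map (LinearMap.mulLeft ℂ c)) :=
        Submodule.finrank_mono (shiftedPartialsSpan_le_map_mulLeft hF τ)
    _ ≤ Module.finrank ℂ (homogeneousSubmodule σ ℂ (τ + d)) :=
        Submodule.finrank_map_le _ _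
    _ = _ := finrank_homogeneousSubmodule _

theorem padded_jacobian_bound_general (N m n : ℕ)
    (P : MvPolynomial (Fin (N + 1)) ℂ) (hhom : P.IsHomogeneous m) :
    ∀ k : ℕ, k < n - m →
      (∀ L : List (Fin (N + 1)), L.length = k →
        ∃ G : MvPolynomial (Fin (N + 1)) ℂ,
          pderivList L (MvPolynomial.X (Fin.last N) ^ (n - m) * P) =
            MvPolynomial.X (Fin.last N) ^ (n - m - k) * G) ∧
      (∀ τ : ℕ,
        Module.finrank ℂ
            (shiftedPartialsSpan (MvPolynomial.X (Fin.last N) ^ (n - m) * P) k τ) ≤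
          Nat.choose (N + 1 + m + τ - 1) (m + τ)) := by
  intro k hk
  have hF : ∀ L : List (Fin (N + 1)), L.length = k → ∃ G, G.IsHomogeneous m ∧
      pderivList L (X (Fin.last N) ^ (n - m) * P) = X (Fin.last N) ^ (n - m - k) * G := by
    rintro L rfl
    exact exists_pderivList_X_pow_mul hhom _ L hk.le
  refine ⟨fun L hL => (hF L hL).imp fun _ => And.right, fun τ => ?_⟩
  calc _ ≤ _ := finrank_shiftedPartialsSpan_le hF τ
    _ = _ := by rw [Fintype.card_fin, add_comm τ, ← add_assoc]

/-- Let `ℓ` be the last of the `N+1` variables of `ℂ[x_1,…,x_{N+1}]`, let `P` be homogeneous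
of degree `m` in the remaining variables, let `n > m` and `F = ℓ^{n−m}·P`. Then for `k < n−m`
every `k`-th order partial derivative of `F` is divisible by `ℓ^{n−m−k}`, and consequently
`dim I^{F,k}_{n−k+τ} ≤ C((N+1)+m+τ−1, m+τ)` for every `τ ≥ 0`. -/
theorem padded_jacobian_bound (N m n : ℕ) (hmn : m < n)
    (P : MvPolynomial (Fin (N + 1)) ℂ) (hhom : P.IsHomogeneous m)
    (hvars : ∀ d ∈ P.support, d (Fin.last N) = 0) :
    ∀ k : ℕ, k < n - m →
      (∀ L : List (Fin (N + 1)), L.length = k →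
        ∃ G : MvPolynomial (Fin (N + 1)) ℂ,
          pderivList L (MvPolynomial.X (Fin.last N) ^ (n - m) * P) =
            MvPolynomial.X (Fin.last N) ^ (n - m - k) * G) ∧
      (∀ τ : ℕ,
        Module.finrank ℂ
            (shiftedPartialsSpan (MvPolynomial.X (Fin.last N) ^ (n - m) * P) k τ) ≤
          Nat.choose (N + 1 + m + τ - 1) (m + τ)) :=
  padded_jacobian_bound_general N m n P hhom
end

section
/- For every n and every k ≤ n, the ℂ-span of all k-th order partial derivatives of the determinant det_n has dimension exactly C(n,k)²; equivalently, dim I^{det_n, k}_{n−k} = C(n,k)² (this span consists of the span of all (n−k)×(n−k) minors of the matrix of variables). -/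
/-- The determinant of the `n × n` matrix of independent variables. -/
noncomputable def detPoly (n : ℕ) : MvPolynomial (Fin n × Fin n) ℂ :=
  Matrix.det (Matrix.of fun i j : Fin n => MvPolynomial.X (i, j))

/-!
By Laplace expansion, differentiating an `(m + 1)`-minor of the generic matrix in a variable
`x_{ij}` gives `±` the `m`-minor obtained by deleting row `i` and column `j` when `x_{ij}` lies in
the minor, and `0` otherwise. Hence, by induction on `k`, the `k`-th partials of `det_n` span the
same space as the `(n - k)`-minors: every `(n - k)`-minor is recovered, up to sign, by enlarging it
by one row and one column and differentiating in the new corner variable. Indexing minors by pairs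
of increasing maps `Fin (n - k) → Fin n`, they are linearly independent: at the `0/1` matrix
supported on the diagonal of one minor, that minor evaluates to `1` and every other one to `0`,
because it has a row or a column outside that support.
-/

open MvPolynomial Matrix

section OrderEmbedding

variable {α : Type*} [LinearOrder α] {m : ℕ}

theorem OrderEmbedding.eq_of_forall_mem_range {f g : Fin m ↪o α}
    (h : ∀ i, f i ∈ Set.range g) : f = g := by
  classical
  have hcard : (Finset.univ.map g.toEmbedding).card = m := by simp
  exact (Finset.orderEmbOfFin_unique' hcard fun i => by simpa using h i).trans
    (Finset.orderEmbOfFin_unique' hcard fun i => by simp).symm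

theorem OrderEmbedding.exists_succAboveOrderEmb_trans_eq [Fintype α] (f : Fin m ↪o α)
    (hm : m < Fintype.card α) :
    ∃ (g : Fin (m + 1) ↪o α) (a : Fin (m + 1)), (Fin.succAboveOrderEmb a).trans g = f := by
  classical
  obtain ⟨x, hx⟩ : ∃ x, x ∉ Set.range f := by
    by_contra! hf
    have := Fintype.card_le_of_surjective f hf
    simp only [Fintype.card_fin] at this
    omega
  set S := insert x (Finset.univ.map f.toEmbedding)
  have hS : S.card = m + 1 := by
    rw [Finset.card_insert_of_notMem (by simpa using hx)]
    simp
  obtain ⟨a, ha⟩ : x ∈ Set.range (S.orderEmbOfFin hS) := by simp [S]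
  refine ⟨S.orderEmbOfFin hS, a, OrderEmbedding.eq_of_forall_mem_range fun i => ?_⟩
  have hmem := S.orderEmbOfFin_mem hS (a.succAbove i)
  have hne : S.orderEmbOfFin hS (a.succAbove i) ≠ x :=
    ha ▸ (S.orderEmbOfFin hS).injective.ne (a.succAbove_ne i)
  simp only [S, Finset.mem_insert, hne, false_or, Finset.mem_map] at hmem
  simpa using hmem

instance [Finite α] : Finite (Fin m ↪o α) :=
  .of_equiv _ Set.powersetCard.ofFinEmbEquiv.symm

theorem Nat.card_orderEmbedding_fin [Finite α] :
    Nat.card (Fin m ↪o α) = (Nat.card α).choose m := by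
  rw [Nat.card_congr Set.powersetCard.ofFinEmbEquiv, Set.powersetCard.card]

end OrderEmbedding

section Minor

variable (R : Type*) [CommRing R] {ι κ : Type*} {m : ℕ}

noncomputable def minor (r : Fin m → ι) (c : Fin m → κ) : MvPolynomial (ι × κ) R :=
  ((mvPolynomialX ι κ R).submatrix r c).det

variable {R}

theorem minor_eq_rename (r : Fin m → ι) (c : Fin m → κ) :
    minor R r c = rename (Prod.map r c) (mvPolynomialX (Fin m) (Fin m) R).det := by
  rw [AlgHom.map_det, minor]
  congr 1
  ext i j
  simp

theorem pderiv_minor_of_notMem_range {r : Fin m → ι} {c : Fin m → κ} {x : ι × κ}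
    (hx : x ∉ Set.range (Prod.map r c)) : pderiv x (minor R r c) = 0 := by
  classical
  refine pderiv_eq_zero_of_notMem_vars fun hvars => ?_
  rw [minor_eq_rename] at hvars
  obtain ⟨y, -, rfl⟩ := Finset.mem_image.mp (vars_rename _ _ hvars)
  exact hx ⟨y, rfl⟩

theorem pderiv_minor {r : Fin (m + 1) → ι} {c : Fin (m + 1) → κ} (hr : r.Injective)
    (hc : c.Injective) (a b : Fin (m + 1)) :
    pderiv (r a, c b) (minor R r c) =
      (-1 : R) ^ (a + b : ℕ) • minor R (r ∘ a.succAbove) (c ∘ b.succAbove) := by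
  have hvanish (c' : Fin m → κ) :
      pderiv (r a, c b) ((mvPolynomialX ι κ R).submatrix (r ∘ a.succAbove) c').det = 0 :=
    pderiv_minor_of_notMem_range fun ⟨i, hi⟩ => a.succAbove_ne i.1 (hr congr($hi.1))
  rw [minor, det_succ_row _ a, map_sum, Finset.sum_eq_single b]
  · simp [minor, hvanish, mul_comm, smul_eq_C_mul]
  · intro j _ hj
    simp [hvanish, hc.ne hj]
  · simp

theorem eval_minor (s : ι × κ → R) (r : Fin m → ι) (c : Fin m → κ) :
    eval s (minor R r c) = (Matrix.of fun i j => s (r i, c j)).det := by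
  rw [minor, RingHom.map_det]
  congr 1
  ext i j
  simp

variable (R) in
noncomputable def diagonalPoint (r : Fin m → ι) (c : Fin m → κ) : ι × κ → R :=
  (Set.range fun a => (r a, c a)).indicator 1

theorem eval_diagonalPoint_minor_self {r : Fin m → ι} {c : Fin m → κ} (hr : r.Injective)
    (hc : c.Injective) :
    eval (diagonalPoint R r c) (minor R r c) = 1 := by
  rw [eval_minor, ← det_one (n := Fin m) (R := R)]
  congr 1
  ext i j
  simp [diagonalPoint, Set.indicator, one_apply, hr.eq_iff, hc.eq_iff]

end Minor

section MinorSpan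

variable (R : Type*) [CommRing R] (ι κ : Type*) [LinearOrder ι] [LinearOrder κ]

noncomputable def minorSpan (m : ℕ) : Submodule R (MvPolynomial (ι × κ) R) :=
  Submodule.span R (Set.range fun rc : (Fin m ↪o ι) × (Fin m ↪o κ) => minor R rc.1 rc.2)

variable {R ι κ} {m : ℕ}

theorem minor_mem_minorSpan (r : Fin m ↪o ι) (c : Fin m ↪o κ) :
    minor R ⇑r ⇑c ∈ minorSpan R ι κ m :=
  Submodule.subset_span ⟨(r, c), rfl⟩

theorem pderiv_mem_minorSpan (x : ι × κ) {p : MvPolynomial (ι × κ) R}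
    (hp : p ∈ minorSpan R ι κ (m + 1)) : pderiv x p ∈ minorSpan R ι κ m := by
  refine (Submodule.span_le (p := (minorSpan R ι κ m).comap (pderiv x).toLinearMap)).mpr ?_ hp
  rintro _ ⟨⟨r, c⟩, rfl⟩
  by_cases hx : x ∈ Set.range (Prod.map r c)
  · obtain ⟨⟨a, b⟩, rfl⟩ := hx
    show pderiv (r a, c b) (minor R r c) ∈ minorSpan R ι κ m
    rw [pderiv_minor r.injective c.injective]
    exact Submodule.smul_mem _ _
      (minor_mem_minorSpan (R := R) ((Fin.succAboveOrderEmb a).trans r)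
        ((Fin.succAboveOrderEmb b).trans c))
  · simp [pderiv_minor_of_notMem_range (R := R) hx]

theorem eval_diagonalPoint_minor_of_ne {r r' : Fin m ↪o ι} {c c' : Fin m ↪o κ}
    (h : (r', c') ≠ (r, c)) : eval (diagonalPoint R r c) (minor R r' c') = 0 := by
  rw [eval_minor]
  obtain hr | hc : r' ≠ r ∨ c' ≠ c := by
    contrapose! h
    rw [h.1, h.2]
  · obtain ⟨i, hi⟩ : ∃ i, r' i ∉ Set.range r := by
      by_contra! H
      exact hr (OrderEmbedding.eq_of_forall_mem_range H)
    refine det_eq_zero_of_row_eq_zero i fun j => Set.indicator_of_notMem ?_ _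
    exact fun ⟨a, ha⟩ => hi ⟨a, congr($ha.1)⟩
  · obtain ⟨j, hj⟩ : ∃ j, c' j ∉ Set.range c := by
      by_contra! H
      exact hc (OrderEmbedding.eq_of_forall_mem_range H)
    refine det_eq_zero_of_column_eq_zero j fun i => Set.indicator_of_notMem ?_ _
    exact fun ⟨a, ha⟩ => hj ⟨a, congr($ha.2)⟩

theorem linearIndependent_minor [Nontrivial R] :
    LinearIndependent R fun rc : (Fin m ↪o ι) × (Fin m ↪o κ) => minor R rc.1 rc.2 := by
  rw [linearIndependent_iff']
  intro s g hsum i hi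
  have := congrArg (eval (diagonalPoint R i.1 i.2)) hsum
  rw [map_sum, Finset.sum_eq_single i] at this
  · simpa [smul_eval, eval_diagonalPoint_minor_self i.1.injective i.2.injective] using this
  · intro j _ hj
    simp [eval_diagonalPoint_minor_of_ne hj]
  · exact fun h => (h hi).elim

theorem finrank_minorSpan [Nontrivial R] [Finite ι] [Finite κ] :
    Module.finrank R (minorSpan R ι κ m) = (Nat.card ι).choose m * (Nat.card κ).choose m := by
  have := Fintype.ofFinite ((Fin m ↪o ι) × (Fin m ↪o κ))
  rw [minorSpan, finrank_span_eq_card linearIndependent_minor, Fintype.card_eq_nat_card,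
    Nat.card_prod, Nat.card_orderEmbedding_fin, Nat.card_orderEmbedding_fin]

end MinorSpan

section Partials

variable {σ : Type*}

theorem pderivList_mem_shiftedPartialsSpan (P : MvPolynomial σ ℂ) {L : List σ} {k : ℕ}
    (hL : L.length = k) : pderivList L P ∈ shiftedPartialsSpan P k 0 :=
  Submodule.subset_span ⟨L, 0, hL, by simp, by simp⟩

theorem shiftedPartialsSpan_zero_le {P : MvPolynomial σ ℂ} {k : ℕ}
    {N : Submodule ℂ (MvPolynomial σ ℂ)}
    (h : ∀ L : List σ, L.length = k → pderivList L P ∈ N) :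
    shiftedPartialsSpan P k 0 ≤ N := by
  refine Submodule.span_le.mpr ?_
  rintro _ ⟨L, M, hL, hM, rfl⟩
  obtain rfl : M = 0 := Finsupp.ext (by simpa [Finsupp.sum, Finset.sum_eq_zero_iff] using hM)
  simpa using h L hL

theorem pderiv_mem_shiftedPartialsSpan_succ {P : MvPolynomial σ ℂ} {k : ℕ} (x : σ)
    {q : MvPolynomial σ ℂ} (hq : q ∈ shiftedPartialsSpan P k 0) :
    pderiv x q ∈ shiftedPartialsSpan P (k + 1) 0 :=
  shiftedPartialsSpan_zero_le (N := (shiftedPartialsSpan P (k + 1) 0).comap (pderiv x).toLinearMap)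
    (fun L hL => pderivList_mem_shiftedPartialsSpan P (L := x :: L) (by simp [hL])) hq

theorem pderivList_mem_minorSpan {ι κ : Type*} [LinearOrder ι] [LinearOrder κ]
    (L : List (ι × κ)) {m : ℕ} {p : MvPolynomial (ι × κ) ℂ}
    (hp : p ∈ minorSpan ℂ ι κ (L.length + m)) : pderivList L p ∈ minorSpan ℂ ι κ m := by
  induction L generalizing m with
  | nil => simpa [pderivList] using hp
  | cons x L ih =>
    exact pderiv_mem_minorSpan x (ih (by rwa [List.length_cons, add_right_comm] at hp))

end Partials

theorem detPoly_eq_minor (n : ℕ) : detPoly n = minor ℂ (id : Fin n → Fin n) id := rfl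

theorem minor_mem_shiftedPartialsSpan_detPoly {n : ℕ} :
    ∀ {k m : ℕ}, k + m = n → ∀ r c : Fin m ↪o Fin n,
      minor ℂ ⇑r ⇑c ∈ shiftedPartialsSpan (detPoly n) k 0
  | 0, m, h, r, c => by
    obtain rfl : n = m := by omega
    have hrefl (f : Fin n ↪o Fin n) : f = RelEmbedding.refl _ :=
      OrderEmbedding.eq_of_forall_mem_range fun i => ⟨f i, rfl⟩
    rw [hrefl r, hrefl c]
    exact pderivList_mem_shiftedPartialsSpan _ (L := []) rfl
  | k + 1, m, h, r, c => by
    obtain ⟨r', a, rfl⟩ := r.exists_succAboveOrderEmb_trans_eq (by simp; omega)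
    obtain ⟨c', b, rfl⟩ := c.exists_succAboveOrderEmb_trans_eq (by simp; omega)
    have hmem := pderiv_mem_shiftedPartialsSpan_succ (r' a, c' b)
      (minor_mem_shiftedPartialsSpan_detPoly (k := k) (m := m + 1) (by omega) r' c')
    rw [pderiv_minor r'.injective c'.injective] at hmem
    have := Submodule.smul_mem _ ((-1 : ℂ) ^ (a + b : ℕ)) hmem
    rwa [smul_smul, ← mul_pow, neg_one_mul, neg_neg, one_pow, one_smul] at this

theorem shiftedPartialsSpan_detPoly {n k : ℕ} (hk : k ≤ n) :
    shiftedPartialsSpan (detPoly n) k 0 = minorSpan ℂ (Fin n) (Fin n) (n - k) := by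
  refine le_antisymm (shiftedPartialsSpan_zero_le fun L hL => pderivList_mem_minorSpan L ?_)
    (Submodule.span_le.mpr ?_)
  · rw [hL, Nat.add_sub_cancel' hk, detPoly_eq_minor]
    exact minor_mem_minorSpan (RelEmbedding.refl _) (RelEmbedding.refl _)
  · rintro _ ⟨⟨r, c⟩, rfl⟩
    exact minor_mem_shiftedPartialsSpan_detPoly (by omega) r c

/-- The ℂ-span of all `k`-th order partial derivatives of `det_n` (the span of all
`(n−k)×(n−k)` minors of the matrix of variables) has dimension exactly `C(n,k)²`. -/
theorem dim_partials_of_det (n k : ℕ) (hk : k ≤ n) :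
    Module.finrank ℂ (shiftedPartialsSpan (detPoly n) k 0) = Nat.choose n k ^ 2 := by
  rw [shiftedPartialsSpan_detPoly hk, finrank_minorSpan, Nat.card_fin, Nat.choose_symm hk, sq]
end

section
/- There exists a constant M such that for all m > M and all n > m², the binomial inequality C(n, 2m)² ≥ C(n² + m − 1, m) holds. -/
lemma pow100_le_factorial (k : ℕ) : 100 ^ k ≤ (100 + k).factorial := by
  induction k with
  | zero => exact Nat.one_le_iff_ne_zero.mpr (Nat.factorial_ne_zero 100)
  | succ k ih =>
    rw [pow_succ, show 100 + (k + 1) = (100 + k) + 1 from rfl, Nat.factorial_succ]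
    calc 100 ^ k * 100 ≤ (100 + k).factorial * (100 + k + 1) :=
          Nat.mul_le_mul ih (by omega)
      _ = (100 + k + 1) * (100 + k).factorial := Nat.mul_comm _ _

lemma fact_big (m : ℕ) (hm : 1000000 < m) :
    100 ^ 100 * 320000 ^ m ≤ m.factorial * 6561 ^ m := by
  have h1 : 100 ^ (m - 100) ≤ m.factorial := by
    have := pow100_le_factorial (m - 100)
    rwa [show 100 + (m - 100) = m by omega] at this
  have h2 : (100 : ℕ) ^ 100 * 100 ^ (m - 100) = 100 ^ m := by
    rw [← pow_add]; congr 1; omega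
  apply Nat.le_of_mul_le_mul_left (c := 100 ^ 100) ?_ (by positivity)
  calc 100 ^ 100 * (100 ^ 100 * 320000 ^ m)
      = 100 ^ 200 * 320000 ^ m := by ring
    _ ≤ 2 ^ m * 320000 ^ m := by
        gcongr ?_ * _
        calc (100:ℕ) ^ 200
            = 100 ^ 200 := rfl
          _ ≤ (2 ^ 7) ^ 200 := Nat.pow_le_pow_left (by norm_num) 200
          _ = 2 ^ 1400 := by rw [← pow_mul]
          _ ≤ 2 ^ m := Nat.pow_le_pow_right (by norm_num) (by omega)
    _ = 640000 ^ m := by rw [← mul_pow]; norm_num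
    _ ≤ 656100 ^ m := Nat.pow_le_pow_left (by norm_num) m
    _ = 100 ^ m * 6561 ^ m := by rw [← mul_pow]; norm_num
    _ = 100 ^ 100 * 100 ^ (m - 100) * 6561 ^ m := by rw [h2]
    _ ≤ 100 ^ 100 * m.factorial * 6561 ^ m := by
        exact Nat.mul_le_mul_right _ (Nat.mul_le_mul_left _ h1)
    _ = 100 ^ 100 * (m.factorial * 6561 ^ m) := by ring

/-- There is a constant `M` such that for all `m > M` and all `n > m²`,
`C(n, 2m)² ≥ C(n² + m − 1, m)`. -/
theorem binomial_estimate_C2 :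
    ∃ M : ℕ, ∀ m : ℕ, m > M → ∀ n : ℕ, n > m ^ 2 →
      Nat.choose n (2 * m) ^ 2 ≥ Nat.choose (n ^ 2 + m - 1) m := by
  use 1000000
  intro m hm n hn
  set N := n ^ 2 + m - 1 with hNdef
  set a := n + 1 - 2 * m with hadef
  have hmsq : m ^ 2 + 1 ≤ n := hn
  have hm2n : 2 * m ≤ n := by nlinarith
  have h1 : a ^ (2 * m) ≤ (2 * m).factorial * n.choose (2 * m) := by
    have := Nat.pow_sub_le_descFactorial n (2 * m)
    rwa [Nat.descFactorial_eq_factorial_mul_choose] at this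
  have h2 : m.factorial * N.choose m ≤ N ^ m := by
    have := Nat.descFactorial_le_pow N m
    rwa [Nat.descFactorial_eq_factorial_mul_choose] at this
  have fN : N ≤ 2 * n ^ 2 := by
    have : m ≤ n ^ 2 := by nlinarith
    omega
  have f9 : 9 * n ≤ 10 * a := by
    have h20 : 20 * m ≤ m ^ 2 := by nlinarith
    omega
  have fmn : m ^ 4 * n ^ 2 ≤ n ^ 4 := by
    have h4 : m ^ 4 ≤ n ^ 2 := by nlinarith
    calc m ^ 4 * n ^ 2 ≤ n ^ 2 * n ^ 2 := Nat.mul_le_mul_right _ h4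
      _ = n ^ 4 := by ring
  have s1 : (2 * m).factorial ≤ (4 * m ^ 2) ^ m := by
    calc (2 * m).factorial ≤ (2 * m) ^ (2 * m) := Nat.factorial_le_pow _
      _ = ((2 * m) ^ 2) ^ m := by rw [← pow_mul]
      _ = (4 * m ^ 2) ^ m := by congr 1; ring
  have key : (2 * m).factorial ^ 2 * N ^ m ≤ m.factorial * a ^ (4 * m) := by
    apply Nat.le_of_mul_le_mul_left
      (c := 100 ^ 100 * 10000 ^ m) ?_ (by positivity)
    calc 100 ^ 100 * 10000 ^ m * ((2 * m).factorial ^ 2 * N ^ m)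
        ≤ 100 ^ 100 * 10000 ^ m * (((4 * m ^ 2) ^ m) ^ 2 * (2 * n ^ 2) ^ m) := by
          gcongr
      _ = 100 ^ 100 * 10000 ^ m * ((16 * m ^ 4) ^ m * (2 * n ^ 2) ^ m) := by
          rw [← pow_mul, show m * 2 = 2 * m by ring, pow_mul,
            show ((4 * m ^ 2) ^ 2) = 16 * m ^ 4 by ring]
      _ = 100 ^ 100 * 320000 ^ m * (m ^ 4 * n ^ 2) ^ m := by
          have e16 : ((16 * m ^ 4) ^ m * (2 * n ^ 2) ^ m : ℕ)
              = 32 ^ m * (m ^ 4 * n ^ 2) ^ m := by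
            rw [← mul_pow, show (16 * m ^ 4 * (2 * n ^ 2) : ℕ)
              = 32 * (m ^ 4 * n ^ 2) by ring, mul_pow]
          have e32 : (10000 : ℕ) ^ m * 32 ^ m = 320000 ^ m := by
            rw [← mul_pow]; norm_num
          rw [e16, ← e32]; ring
      _ ≤ m.factorial * 6561 ^ m * (m ^ 4 * n ^ 2) ^ m := by
          exact Nat.mul_le_mul_right _ (fact_big m hm)
      _ = m.factorial * (6561 * (m ^ 4 * n ^ 2)) ^ m := by
          rw [mul_assoc, ← mul_pow]
      _ ≤ m.factorial * (6561 * n ^ 4) ^ m := by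
          gcongr
      _ = m.factorial * ((9 * n) ^ 4) ^ m := by congr 2; ring
      _ ≤ m.factorial * ((10 * a) ^ 4) ^ m := by
          gcongr
      _ = m.factorial * (10000 * a ^ 4) ^ m := by congr 2; ring
      _ = 10000 ^ m * (m.factorial * a ^ (4 * m)) := by
          rw [mul_pow, ← pow_mul, show 4 * m = m * 4 by ring]; ring
      _ ≤ 100 ^ 100 * 10000 ^ m * (m.factorial * a ^ (4 * m)) := by
          have : (1:ℕ) ≤ 100 ^ 100 := Nat.one_le_pow _ _ (by norm_num)
          nlinarith [Nat.zero_le (10000 ^ m * (m.factorial * a ^ (4 * m)))]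
  rw [ge_iff_le]
  apply Nat.le_of_mul_le_mul_left
    (c := m.factorial * (2 * m).factorial ^ 2) ?_ (by positivity)
  calc m.factorial * (2 * m).factorial ^ 2 * N.choose m
      = (2 * m).factorial ^ 2 * (m.factorial * N.choose m) := by ring
    _ ≤ (2 * m).factorial ^ 2 * N ^ m := Nat.mul_le_mul_left _ h2
    _ ≤ m.factorial * a ^ (4 * m) := key
    _ = m.factorial * (a ^ (2 * m)) ^ 2 := by
        rw [← pow_mul, show 2 * m * 2 = 4 * m by ring]
    _ ≤ m.factorial * ((2 * m).factorial * n.choose (2 * m)) ^ 2 :=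
        Nat.mul_le_mul_left _ (Nat.pow_le_pow_left h1 2)
    _ = m.factorial * (2 * m).factorial ^ 2 * n.choose (2 * m) ^ 2 := by ring
end

section
/- There exists a constant M such that for all m > M, all n > 2m² + 2m, all k < 2m, and all τ ≥ (3/2)·n²·m (with τ ≥ n−k), the inequality 2·C(n²+τ−1, τ) − C(n²+τ+m−1, τ+m) − C(n²+τ−(n−k)−1, τ−(n−k)) > 0 holds. -/
open Real

private lemma choose_step (A t : ℕ) :
    ((A + (t + 1)).choose (t + 1) : ℝ) * ((t : ℝ) + 1) =
      ((A + t).choose t : ℝ) * ((A : ℝ) + (t : ℝ) + 1) := by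
  have e : A + (t + 1) = A + t + 1 := by omega
  rw [e]
  have h := Nat.add_one_mul_choose_eq (A + t) t
  have h2 := congrArg (fun x : ℕ => (x : ℝ)) h
  push_cast [Nat.succ_eq_add_one] at h2
  linarith

private lemma choose_ratio (A t : ℕ) :
    ((A + (t + 1)).choose (t + 1) : ℝ) =
      ((A + t).choose t : ℝ) * (((A : ℝ) + (t : ℝ) + 1) / ((t : ℝ) + 1)) := by
  have ht1 : ((t : ℝ) + 1) ≠ 0 := by positivity
  rw [mul_div_assoc', eq_div_iff ht1]
  exact choose_step A t

private lemma g_up (A τ : ℕ) (j : ℕ) :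
    ((A + (τ + j)).choose (τ + j) : ℝ) ≤
      ((A + τ).choose τ : ℝ) * (((A : ℝ) + (τ : ℝ) + 1) / ((τ : ℝ) + 1)) ^ j := by
  induction j with
  | zero => simp
  | succ j ih =>
    have e : τ + (j + 1) = (τ + j) + 1 := by omega
    rw [e, choose_ratio A (τ + j)]
    have hc : ((τ + j : ℕ) : ℝ) = (τ : ℝ) + (j : ℝ) := by push_cast; ring
    rw [hc]
    have hAnn : (0:ℝ) ≤ (A:ℝ) := Nat.cast_nonneg A
    have hjnn : (0:ℝ) ≤ (j:ℝ) := Nat.cast_nonneg j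
    have hτnn : (0:ℝ) ≤ (τ:ℝ) := Nat.cast_nonneg τ
    have hCnn : (0:ℝ) ≤ ((A + (τ + j)).choose (τ + j) : ℝ) := Nat.cast_nonneg _
    have hratio : ((A:ℝ) + ((τ:ℝ) + (j:ℝ)) + 1) / (((τ:ℝ) + (j:ℝ)) + 1)
        ≤ ((A:ℝ) + (τ:ℝ) + 1) / ((τ:ℝ) + 1) := by
      rw [div_le_div_iff₀ (by positivity) (by positivity)]
      nlinarith [mul_nonneg hAnn hjnn]
    have hRnn : (0:ℝ) ≤ ((A : ℝ) + (τ : ℝ) + 1) / ((τ : ℝ) + 1) := by positivity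
    calc ((A + (τ + j)).choose (τ + j) : ℝ)
            * (((A:ℝ) + ((τ:ℝ) + (j:ℝ)) + 1) / (((τ:ℝ) + (j:ℝ)) + 1))
        ≤ ((A + (τ + j)).choose (τ + j) : ℝ)
            * (((A:ℝ) + (τ:ℝ) + 1) / ((τ:ℝ) + 1)) :=
            mul_le_mul_of_nonneg_left hratio hCnn
      _ ≤ (((A + τ).choose τ : ℝ) * (((A : ℝ) + (τ : ℝ) + 1) / ((τ : ℝ) + 1)) ^ j)
            * (((A:ℝ) + (τ:ℝ) + 1) / ((τ:ℝ) + 1)) :=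
            mul_le_mul_of_nonneg_right ih hRnn
      _ = ((A + τ).choose τ : ℝ) * (((A : ℝ) + (τ : ℝ) + 1) / ((τ : ℝ) + 1)) ^ (j + 1) := by
            ring

private lemma g_down (A : ℕ) : ∀ (j t : ℕ),
    ((A + t).choose t : ℝ) * (((A : ℝ) + (t : ℝ) + (j : ℝ)) / ((t : ℝ) + (j : ℝ))) ^ j ≤
      ((A + (t + j)).choose (t + j) : ℝ) := by
  intro j
  induction j with
  | zero => intro t; simp
  | succ j ih =>
    intro t
    have ih' := ih (t + 1)
    push_cast at ih'
    have e1 : t + 1 + j = t + (j + 1) := by omega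
    rw [e1] at ih'
    push_cast
    have hs : (0:ℝ) < (t:ℝ) + ((j:ℝ) + 1) := by positivity
    have ht1 : (0:ℝ) < (t:ℝ) + 1 := by positivity
    have hAnn : (0:ℝ) ≤ (A:ℝ) := Nat.cast_nonneg A
    have hjnn : (0:ℝ) ≤ (j:ℝ) := Nat.cast_nonneg j
    have hCnn : (0:ℝ) ≤ ((A + t).choose t : ℝ) := Nat.cast_nonneg _
    have hratio : ((A:ℝ) + (t:ℝ) + ((j:ℝ) + 1)) / ((t:ℝ) + ((j:ℝ) + 1))
        ≤ ((A:ℝ) + (t:ℝ) + 1) / ((t:ℝ) + 1) := by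
      rw [div_le_div_iff₀ hs ht1]
      nlinarith [mul_nonneg hAnn hjnn]
    have hCeq := choose_ratio A t
    have hkey : ((A + t).choose t : ℝ)
          * (((A:ℝ) + (t:ℝ) + ((j:ℝ) + 1)) / ((t:ℝ) + ((j:ℝ) + 1)))
        ≤ ((A + (t + 1)).choose (t + 1) : ℝ) := by
      rw [hCeq]
      exact mul_le_mul_of_nonneg_left hratio hCnn
    have hPnn : (0:ℝ) ≤ (((A:ℝ) + (t:ℝ) + ((j:ℝ) + 1)) / ((t:ℝ) + ((j:ℝ) + 1))) ^ j := by
      positivity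
    have hfix : ((A:ℝ) + ((t:ℝ) + 1) + (j:ℝ)) / (((t:ℝ) + 1) + (j:ℝ))
        = ((A:ℝ) + (t:ℝ) + ((j:ℝ) + 1)) / ((t:ℝ) + ((j:ℝ) + 1)) := by ring_nf
    rw [hfix] at ih'
    calc ((A + t).choose t : ℝ)
            * (((A : ℝ) + (t : ℝ) + ((j:ℝ) + 1)) / ((t : ℝ) + ((j:ℝ) + 1))) ^ (j + 1)
        = (((A + t).choose t : ℝ)
            * (((A:ℝ) + (t:ℝ) + ((j:ℝ) + 1)) / ((t:ℝ) + ((j:ℝ) + 1))))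
            * (((A:ℝ) + (t:ℝ) + ((j:ℝ) + 1)) / ((t:ℝ) + ((j:ℝ) + 1))) ^ j := by ring
      _ ≤ ((A + (t + 1)).choose (t + 1) : ℝ)
            * (((A:ℝ) + (t:ℝ) + ((j:ℝ) + 1)) / ((t:ℝ) + ((j:ℝ) + 1))) ^ j :=
            mul_le_mul_of_nonneg_right hkey hPnn
      _ ≤ ((A + (t + (j + 1))).choose (t + (j + 1)) : ℝ) := ih'

private lemma exp_le_linear {u : ℝ} (h0 : 0 ≤ u) (h1 : u ≤ 2/3) :
    Real.exp u ≤ 1 + (36/25) * u := by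
  have he : Real.exp (2/3) < 49/25 := by
    have h2 : Real.exp (2/3 : ℝ) ^ (3:ℕ) = Real.exp 2 := by
      rw [← Real.exp_nat_mul]; norm_num
    have h4 : Real.exp (2:ℝ) = Real.exp 1 ^ (2:ℕ) := by
      rw [← Real.exp_nat_mul]; norm_num
    have h5 : Real.exp (2/3 : ℝ) ^ (3:ℕ) < (49/25 : ℝ) ^ (3:ℕ) := by
      rw [h2, h4]
      nlinarith [Real.exp_one_lt_d9, Real.exp_pos 1]
    exact lt_of_pow_lt_pow_left₀ 3 (by norm_num) h5
  have hc := convexOn_exp.2 (Set.mem_univ (0:ℝ)) (Set.mem_univ (2/3:ℝ))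
      (show (0:ℝ) ≤ 1 - (3/2)*u by linarith)
      (show (0:ℝ) ≤ (3/2)*u by linarith)
      (by ring)
  simp only [smul_eq_mul, mul_zero, zero_add, Real.exp_zero, mul_one] at hc
  have harg : (3/2)*u*(2/3) = u := by ring
  rw [harg] at hc
  nlinarith [mul_le_mul_of_nonneg_left he.le (show (0:ℝ) ≤ (3/2)*u by linarith)]

set_option maxHeartbeats 1000000 in
/-- There is a constant `M` such that for all `m > M`, all `n > 2m² + 2m`, all `k < 2m`, and
all `τ ≥ (3/2)·n²·m` with `τ ≥ n−k`,
`2·C(n²+τ−1, τ) − C(n²+τ+m−1, τ+m) − C(n²+τ−(n−k)−1, τ−(n−k)) > 0`. -/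
theorem binomial_estimate_C3 :
    ∃ M : ℕ, ∀ m : ℕ, m > M → ∀ n : ℕ, n > 2 * m ^ 2 + 2 * m → ∀ k : ℕ, k < 2 * m →
      ∀ τ : ℕ, 3 * n ^ 2 * m ≤ 2 * τ → n - k ≤ τ →
        Nat.choose (n ^ 2 + τ + m - 1) (τ + m) +
            Nat.choose (n ^ 2 + τ - (n - k) - 1) (τ - (n - k)) <
          2 * Nat.choose (n ^ 2 + τ - 1) τ := by
  use 100
  intro m hm n hn k hk τ hτ hdτ
  set d := n - k with hd
  set N := n ^ 2 with hN
  have hp : m ≤ m ^ 2 := Nat.le_self_pow two_ne_zero m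
  have hn2 : 2 ≤ n := by omega
  have hN4 : 4 ≤ N := by
    have := Nat.pow_le_pow_left hn2 2
    omega
  set A := N - 1 with hA
  have hNA : N = A + 1 := by omega
  have hA3 : 3 ≤ A := by omega
  have hτpos : 0 < τ := by
    have : 0 < 3 * N * m := by positivity
    omega
  have hd2 : 2 * m ^ 2 + 2 ≤ d := by omega
  have hdpos : 0 < d := by omega
  have h2dA : 3 * m ^ 2 * N ≤ 2 * (d * A) := by
    have t1 : (2 * m ^ 2 + 2) * A ≤ d * A := Nat.mul_le_mul_right A hd2
    have t2 : m ^ 2 * 3 ≤ m ^ 2 * A := Nat.mul_le_mul_left (m ^ 2) hA3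
    rw [hNA]
    nlinarith [t1, t2]
  -- rewrite the indices
  have e1 : N + τ + m - 1 = A + (τ + m) := by omega
  have e2 : N + τ - 1 = A + τ := by omega
  have e3 : N + τ - d - 1 = A + (τ - d) := by omega
  rw [e1, e2, e3, ← Nat.cast_lt (α := ℝ)]
  push_cast
  -- real setup
  have htR : (0:ℝ) < (τ:ℝ) := by exact_mod_cast hτpos
  have hmR : (101:ℝ) ≤ (m:ℝ) := by exact_mod_cast hm
  have hNR : (4:ℝ) ≤ (N:ℝ) := by exact_mod_cast hN4
  have hAR : (3:ℝ) ≤ (A:ℝ) := by exact_mod_cast hA3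
  have hdR : (1:ℝ) ≤ (d:ℝ) := by exact_mod_cast hdpos
  have hNAR : (N:ℝ) = (A:ℝ) + 1 := by exact_mod_cast hNA
  have hτR : 3 * (N:ℝ) * m ≤ 2 * τ := by exact_mod_cast hτ
  have h2dAR : 3 * (m:ℝ)^2 * N ≤ 2 * ((d:ℝ) * A) := by exact_mod_cast h2dA
  set u : ℝ := (m:ℝ) * ((N:ℝ) / (τ:ℝ)) with hu_def
  set v : ℝ := (d:ℝ) * ((A:ℝ) / (τ:ℝ)) with hv_def
  have hu0 : 0 < u := by rw [hu_def]; positivity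
  have hv0 : 0 < v := by
    rw [hv_def]
    have : (0:ℝ) < (A:ℝ) := by linarith
    positivity
  have hu23 : u ≤ 2/3 := by
    rw [hu_def, show (m:ℝ) * ((N:ℝ)/(τ:ℝ)) = ((m:ℝ)*(N:ℝ))/(τ:ℝ) by ring,
      div_le_iff₀ htR]
    linarith
  have hv32 : (3/2) * (m:ℝ) * u ≤ v := by
    rw [hu_def, hv_def,
      show (3/2) * (m:ℝ) * ((m:ℝ) * ((N:ℝ)/(τ:ℝ))) = ((3:ℝ)*(m:ℝ)^2*(N:ℝ))/(2*(τ:ℝ)) by ring,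
      show (d:ℝ) * ((A:ℝ)/(τ:ℝ)) = (2*((d:ℝ)*(A:ℝ)))/(2*(τ:ℝ)) by ring]
    apply div_le_div_of_nonneg_right h2dAR (by linarith)
  
  -- index arithmetic for the down bound
  have hτdR : ((τ - d : ℕ) : ℝ) = (τ:ℝ) - (d:ℝ) := by
    exact Nat.cast_sub hdτ
  have hdown := g_down A d (τ - d)
  have e4 : (τ - d) + d = τ := by omega
  rw [e4, hτdR] at hdown
  have h5 : (A:ℝ) + ((τ:ℝ) - (d:ℝ)) + (d:ℝ) = (A:ℝ) + (τ:ℝ) := by ring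
  have h6 : ((τ:ℝ) - (d:ℝ)) + (d:ℝ) = (τ:ℝ) := by ring
  rw [h5, h6] at hdown
  have hBern : 1 + v ≤ (((A:ℝ) + (τ:ℝ)) / (τ:ℝ)) ^ d := by
    have h1 : ((A:ℝ) + (τ:ℝ)) / (τ:ℝ) = 1 + (A:ℝ) / (τ:ℝ) := by
      rw [add_div, div_self htR.ne']; exact add_comm _ _
    rw [h1, hv_def]
    have hge : (0:ℝ) ≤ (A:ℝ) / (τ:ℝ) := by positivity
    exact one_add_mul_le_pow (by linarith) d
  have hC2 : ((A + (τ - d)).choose (τ - d) : ℝ) * (1 + v) ≤ ((A + τ).choose τ : ℝ) :=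
    le_trans (mul_le_mul_of_nonneg_left hBern (Nat.cast_nonneg _)) hdown
  -- upper bound
  have hR_le : ((A:ℝ) + (τ:ℝ) + 1) / ((τ:ℝ) + 1) ≤ 1 + (N:ℝ) / (τ:ℝ) := by
    have hrhs : ((N:ℝ) + (τ:ℝ)) / (τ:ℝ) = 1 + (N:ℝ) / (τ:ℝ) := by
      rw [add_div, div_self htR.ne']; exact add_comm _ _
    rw [← hrhs, div_le_div_iff₀ (by positivity) htR, hNAR]
    nlinarith [Nat.cast_nonneg (α := ℝ) A, htR]
  have hpow1 : (((A:ℝ) + (τ:ℝ) + 1) / ((τ:ℝ) + 1)) ^ m ≤ (1 + (N:ℝ) / (τ:ℝ)) ^ m :=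
    pow_le_pow_left₀ (by positivity) hR_le m
  have hpow2 : (1 + (N:ℝ) / (τ:ℝ)) ^ m ≤ Real.exp ((N:ℝ) / (τ:ℝ)) ^ m :=
    pow_le_pow_left₀ (by positivity) (by linarith [Real.add_one_le_exp ((N:ℝ)/(τ:ℝ))]) m
  have hpow3 : Real.exp ((N:ℝ) / (τ:ℝ)) ^ m = Real.exp u := by
    rw [← Real.exp_nat_mul, hu_def]
  have hexp := exp_le_linear hu0.le hu23
  have hC1 : ((A + (τ + m)).choose (τ + m) : ℝ)
      ≤ ((A + τ).choose τ : ℝ) * (1 + 36/25 * u) := by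
    refine le_trans (g_up A τ m) ?_
    have hchain : (((A:ℝ) + (τ:ℝ) + 1) / ((τ:ℝ) + 1)) ^ m ≤ 1 + 36/25 * u := by
      rw [← hpow3] at hexp
      linarith
    exact mul_le_mul_of_nonneg_left hchain (Nat.cast_nonneg _)
  -- key numeric inequality
  have hkey : (36/25) * u * (1 + v) < v := by
    nlinarith [mul_le_mul_of_nonneg_right hu23 hv0.le,
      mul_nonneg (sub_nonneg.mpr hmR) hu0.le, hv32, hu0, hv0]
  have h1v : (0:ℝ) < 1 + v := by linarith
  have hC0 : (0:ℝ) < ((A + τ).choose τ : ℝ) := by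
    exact_mod_cast Nat.choose_pos (Nat.le_add_left τ A)
  have hlt : ((A + τ).choose τ : ℝ) < (((A + τ).choose τ : ℝ) * (1 - 36/25 * u)) * (1 + v) := by
    nlinarith [mul_pos hC0 (show (0:ℝ) < v - 36/25 * u * (1 + v) by linarith)]
  have hC2' : ((A + (τ - d)).choose (τ - d) : ℝ)
      < ((A + τ).choose τ : ℝ) * (1 - 36/25 * u) :=
    lt_of_mul_lt_mul_right (lt_of_le_of_lt hC2 hlt) h1v.le
  nlinarith [hC1, hC2', hC0]
end

section
/- For all m, n with n > m, every k ≤ n − m, and every τ ≥ 0, when the padded permanent ℓ^{n−m}·perm_m is regarded as a homogeneous polynomial of degree n in n² variables, its shifted partial derivatives satisfy dim I^{ℓ^{n−m}·perm_m, k}_{n−k+τ} ≤ (Σ_{j=0}^{k} C(m, j)²) · C(n² + τ − 1, τ). -/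
/-- The padded permanent `ℓ^{n-m}·perm_m`, viewed as a polynomial of degree `n` in the `n²`
variables `x^s_t`; the permanent variables are `y^i_j = x^i_j` (`1 ≤ i, j ≤ m`), and
`ℓ = x^{m+1}_{m+1}`. -/
noncomputable def paddedPerm (m n : ℕ) : MvPolynomial (Fin n × Fin n) ℂ :=
  if h : m < n then
    (MvPolynomial.X (⟨m, h⟩, ⟨m, h⟩)) ^ (n - m) *
      ∑ σ : Equiv.Perm (Fin m), ∏ i : Fin m,
        MvPolynomial.X ((Fin.castLE h.le i), (Fin.castLE h.le (σ i)))
  else 0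

open MvPolynomial Finset in
/-- Leibniz rule for a finset product of `X`'s. -/
lemma pderiv_prod_X {σ α : Type*} [DecidableEq σ] [DecidableEq α]
    (s : Finset α) (g : α → σ) (v : σ) :
    MvPolynomial.pderiv v (∏ i ∈ s, (MvPolynomial.X (g i) : MvPolynomial σ ℂ)) =
      ∑ i ∈ s, if g i = v then ∏ j ∈ s.erase i, (MvPolynomial.X (g j) : MvPolynomial σ ℂ)
        else 0 := by
  classical
  induction s using Finset.induction_on with
  | empty => simp
  | @insert a s ha ih =>
    rw [Finset.prod_insert ha, MvPolynomial.pderiv_mul, ih, Finset.sum_insert ha,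
      Finset.erase_insert ha]
    congr 1
    · by_cases hgav : g a = v
      · rw [if_pos hgav, hgav, MvPolynomial.pderiv_X_self, one_mul]
      · rw [if_neg hgav, MvPolynomial.pderiv_X_of_ne hgav, zero_mul]
    · rw [Finset.mul_sum]
      refine Finset.sum_congr rfl fun i hi => ?_
      have hia : a ≠ i := fun hh => ha (hh ▸ hi)
      rw [Finset.erase_insert_of_ne hia, Finset.prod_insert (fun hc => ha (Finset.mem_of_mem_erase hc)),
        mul_ite, mul_zero]

section Aux

open MvPolynomial Finset

variable {m n : ℕ}

/-- The "sub-permanent" on rows `R` and columns `C`. -/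
noncomputable def sperm (h : m ≤ n) (R C : Finset (Fin m)) : MvPolynomial (Fin n × Fin n) ℂ :=
  ∑ e : {x // x ∈ R} ≃ {x // x ∈ C}, ∏ i : {x // x ∈ R},
    MvPolynomial.X (Fin.castLE h i.1, Fin.castLE h (e i).1)

/-- Extending an equivalence on erased sets. -/
noncomputable def extEquiv {α β : Type*} [DecidableEq α] [DecidableEq β]
    {R : Finset α} {C : Finset β} {p : α} {q : β} (hp : p ∈ R) (hq : q ∈ C)
    (e : {x // x ∈ R.erase p} ≃ {y // y ∈ C.erase q}) : {x // x ∈ R} ≃ {y // y ∈ C} where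
  toFun x := if h : x.1 = p then ⟨q, hq⟩
    else ⟨(e ⟨x.1, Finset.mem_erase.2 ⟨h, x.2⟩⟩).1,
      Finset.mem_of_mem_erase (e ⟨x.1, Finset.mem_erase.2 ⟨h, x.2⟩⟩).2⟩
  invFun y := if h : y.1 = q then ⟨p, hp⟩
    else ⟨(e.symm ⟨y.1, Finset.mem_erase.2 ⟨h, y.2⟩⟩).1,
      Finset.mem_of_mem_erase (e.symm ⟨y.1, Finset.mem_erase.2 ⟨h, y.2⟩⟩).2⟩
  left_inv x := by
    by_cases h : x.1 = p
    · simp only [h, dif_pos]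
      exact Subtype.ext h.symm
    · simp only [dif_neg h]
      have h2 : (e ⟨x.1, Finset.mem_erase.2 ⟨h, x.2⟩⟩).1 ≠ q :=
        (Finset.mem_erase.1 (e ⟨x.1, Finset.mem_erase.2 ⟨h, x.2⟩⟩).2).1
      simp only [dif_neg h2]
      apply Subtype.ext
      show (e.symm _).1 = x.1
      rw [show (⟨(e ⟨x.1, Finset.mem_erase.2 ⟨h, x.2⟩⟩).1,
        Finset.mem_erase.2 ⟨h2, Finset.mem_of_mem_erase (e ⟨x.1, Finset.mem_erase.2 ⟨h, x.2⟩⟩).2⟩⟩ :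
          {y // y ∈ C.erase q}) = e ⟨x.1, Finset.mem_erase.2 ⟨h, x.2⟩⟩ from rfl,
        Equiv.symm_apply_apply]
  right_inv y := by
    by_cases h : y.1 = q
    · simp only [h, dif_pos]
      exact Subtype.ext h.symm
    · simp only [dif_neg h]
      have h2 : (e.symm ⟨y.1, Finset.mem_erase.2 ⟨h, y.2⟩⟩).1 ≠ p :=
        (Finset.mem_erase.1 (e.symm ⟨y.1, Finset.mem_erase.2 ⟨h, y.2⟩⟩).2).1
      simp only [dif_neg h2]
      apply Subtype.ext
      show (e _).1 = y.1
      rw [show (⟨(e.symm ⟨y.1, Finset.mem_erase.2 ⟨h, y.2⟩⟩).1,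
        Finset.mem_erase.2 ⟨h2, Finset.mem_of_mem_erase (e.symm ⟨y.1, Finset.mem_erase.2 ⟨h, y.2⟩⟩).2⟩⟩ :
          {x // x ∈ R.erase p}) = e.symm ⟨y.1, Finset.mem_erase.2 ⟨h, y.2⟩⟩ from rfl,
        Equiv.apply_symm_apply]

/-- Restricting an equivalence fixing `p ↦ q` to the erased sets. -/
noncomputable def restrEquiv {α β : Type*} [DecidableEq α] [DecidableEq β]
    {R : Finset α} {C : Finset β} {p : α} {q : β} (hp : p ∈ R) (hq : q ∈ C)
    (e : {x // x ∈ R} ≃ {y // y ∈ C}) (he : e ⟨p, hp⟩ = ⟨q, hq⟩) :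
    {x // x ∈ R.erase p} ≃ {y // y ∈ C.erase q} where
  toFun x := ⟨(e ⟨x.1, Finset.mem_of_mem_erase x.2⟩).1, Finset.mem_erase.2
    ⟨fun hc => (Finset.mem_erase.1 x.2).1 (by
        have : e ⟨x.1, Finset.mem_of_mem_erase x.2⟩ = ⟨q, hq⟩ := Subtype.ext hc
        have := e.injective (this.trans he.symm)
        exact congrArg Subtype.val this),
      (e ⟨x.1, Finset.mem_of_mem_erase x.2⟩).2⟩⟩
  invFun y := ⟨(e.symm ⟨y.1, Finset.mem_of_mem_erase y.2⟩).1, Finset.mem_erase.2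
    ⟨fun hc => (Finset.mem_erase.1 y.2).1 (by
        have h1 : e.symm ⟨y.1, Finset.mem_of_mem_erase y.2⟩ = ⟨p, hp⟩ := Subtype.ext hc
        have h2 : (⟨y.1, Finset.mem_of_mem_erase y.2⟩ : {y // y ∈ C}) = ⟨q, hq⟩ := by
          rw [← he, ← h1, Equiv.apply_symm_apply]
        exact congrArg Subtype.val h2),
      (e.symm ⟨y.1, Finset.mem_of_mem_erase y.2⟩).2⟩⟩
  left_inv x := by
    apply Subtype.ext
    show (e.symm _).1 = x.1
    rw [show (⟨(e ⟨x.1, Finset.mem_of_mem_erase x.2⟩).1,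
      (e ⟨x.1, Finset.mem_of_mem_erase x.2⟩).2⟩ : {y // y ∈ C}) =
        e ⟨x.1, Finset.mem_of_mem_erase x.2⟩ from rfl, Equiv.symm_apply_apply]
  right_inv y := by
    apply Subtype.ext
    show (e _).1 = y.1
    rw [show (⟨(e.symm ⟨y.1, Finset.mem_of_mem_erase y.2⟩).1,
      (e.symm ⟨y.1, Finset.mem_of_mem_erase y.2⟩).2⟩ : {x // x ∈ R}) =
        e.symm ⟨y.1, Finset.mem_of_mem_erase y.2⟩ from rfl, Equiv.apply_symm_apply]

lemma sperm_pderiv_ne (h : m ≤ n) (R C : Finset (Fin m)) (v : Fin n × Fin n)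
    (hv : ∀ p ∈ R, ∀ q ∈ C, v ≠ (Fin.castLE h p, Fin.castLE h q)) :
    MvPolynomial.pderiv v (sperm h R C) = 0 := by
  classical
  rw [sperm, map_sum]
  refine Finset.sum_eq_zero fun e _ => ?_
  rw [pderiv_prod_X]
  refine Finset.sum_eq_zero fun i _ => ?_
  rw [if_neg]
  exact fun hgv => hv i.1 i.2 (e i).1 (e i).2 hgv.symm

lemma sperm_pderiv_mem (h : m ≤ n) (R C : Finset (Fin m)) (p q : Fin m)
    (hp : p ∈ R) (hq : q ∈ C) :
    MvPolynomial.pderiv (Fin.castLE h p, Fin.castLE h q) (sperm h R C) =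
      sperm h (R.erase p) (C.erase q) := by
  classical
  have hcast : ∀ x y : Fin m, Fin.castLE h x = Fin.castLE h y → x = y := fun x y hxy =>
    Fin.ext (by simpa using congrArg Fin.val hxy)
  rw [sperm, map_sum]
  have step : ∀ e : {x // x ∈ R} ≃ {y // y ∈ C},
      MvPolynomial.pderiv (Fin.castLE h p, Fin.castLE h q)
        (∏ i : {x // x ∈ R},
          (MvPolynomial.X (Fin.castLE h i.1, Fin.castLE h (e i).1) :
            MvPolynomial (Fin n × Fin n) ℂ)) =
      if e ⟨p, hp⟩ = ⟨q, hq⟩ then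
        ∏ i ∈ Finset.univ.erase ⟨p, hp⟩,
          (MvPolynomial.X (Fin.castLE h i.1, Fin.castLE h (e i).1) :
            MvPolynomial (Fin n × Fin n) ℂ)
      else 0 := by
    intro e
    rw [pderiv_prod_X]
    rw [Finset.sum_eq_single (⟨p, hp⟩ : {x // x ∈ R})]
    · refine if_congr ?_ rfl rfl
      constructor
      · intro hh
        have h2 := (Prod.ext_iff.1 hh).2
        exact Subtype.ext (hcast _ _ h2)
      · intro hh
        rw [hh]
    · intro i _ hip
      rw [if_neg]
      intro hh
      have h1 := (Prod.ext_iff.1 hh).1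
      exact hip (Subtype.ext (hcast _ _ h1))
    · intro hc
      exact absurd (Finset.mem_univ _) hc
  rw [Finset.sum_congr rfl fun e _ => step e, ← Finset.sum_filter, sperm]
  refine Finset.sum_bij'
    (fun e he => restrEquiv hp hq e (Finset.mem_filter.1 he).2)
    (fun e' _ => extEquiv hp hq e') (fun e he => Finset.mem_univ _)
    (fun e' he' => Finset.mem_filter.2 ⟨Finset.mem_univ _, dif_pos rfl⟩)
    ?_ ?_ ?_
  · -- left_inv : extEquiv (restrEquiv e) = e
    intro e he
    have hpq := (Finset.mem_filter.1 he).2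
    apply Equiv.ext
    intro x
    show extEquiv hp hq _ x = e x
    rw [extEquiv]
    simp only [Equiv.coe_fn_mk]
    by_cases hxp : x.1 = p
    · rw [dif_pos hxp]
      have : x = ⟨p, hp⟩ := Subtype.ext hxp
      rw [this, hpq]
    · rw [dif_neg hxp]
      apply Subtype.ext
      show (e _).1 = (e x).1
      rfl
  · -- right_inv : restrEquiv (extEquiv e') = e'
    intro e' he'
    apply Equiv.ext
    intro x'
    apply Subtype.ext
    show (extEquiv hp hq e' _).1 = (e' x').1
    rw [extEquiv]
    simp only [Equiv.coe_fn_mk]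
    have hx'p : ((⟨x'.1, Finset.mem_of_mem_erase x'.2⟩ : {x // x ∈ R}) : {x // x ∈ R}).1 ≠ p :=
      (Finset.mem_erase.1 x'.2).1
    rw [dif_neg hx'p]
  · -- terms agree
    intro e he
    refine Finset.prod_bij'
      (fun (i : {x // x ∈ R}) (hi : i ∈ Finset.univ.erase ⟨p, hp⟩) =>
        (⟨i.1, Finset.mem_erase.2 ⟨fun hc => (Finset.mem_erase.1 hi).1 (Subtype.ext hc), i.2⟩⟩ :
          {x // x ∈ R.erase p}))
      (fun i' _ => ⟨i'.1, Finset.mem_of_mem_erase i'.2⟩)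
      (fun _ _ => Finset.mem_univ _)
      (fun i' _ => Finset.mem_erase.2
        ⟨fun hc => (Finset.mem_erase.1 i'.2).1 (congrArg Subtype.val hc), Finset.mem_univ _⟩)
      (fun _ _ => rfl) (fun _ _ => rfl) ?_
    intro i hi
    rfl

/-- The building block `ℓ^a · sperm R C`. -/
noncomputable def eltP (h : m < n) (a : ℕ) (R C : Finset (Fin m)) :
    MvPolynomial (Fin n × Fin n) ℂ :=
  MvPolynomial.X (⟨m, h⟩, ⟨m, h⟩) ^ a * sperm h.le R C

/-- Candidate spanning set for the `k`-th order partials. -/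
def SS (h : m < n) (k : ℕ) : Set (MvPolynomial (Fin n × Fin n) ℂ) :=
  {x | ∃ j R C, j ≤ k ∧ j ≤ m ∧ R.card = m - j ∧ C.card = m - j ∧
    x = eltP h (n - m - (k - j)) R C}

lemma paddedPerm_eq (h : m < n) :
    paddedPerm m n = eltP h (n - m) Finset.univ Finset.univ := by
  rw [paddedPerm, dif_pos h, eltP, sperm]
  congr 1
  let u : {x // x ∈ (Finset.univ : Finset (Fin m))} ≃ Fin m :=
    Equiv.subtypeUnivEquiv (fun x => Finset.mem_univ x)
  refine Fintype.sum_equiv ((u.equivCongr u).symm) _ _ (fun σ => ?_)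
  refine Fintype.prod_equiv u.symm _ _ (fun i => ?_)
  rfl

lemma eltP_pderiv_mem (h : m < n) (k : ℕ) (hk1 : k + 1 ≤ n - m) (v : Fin n × Fin n)
    (x : MvPolynomial (Fin n × Fin n) ℂ) (hx : x ∈ SS h k) :
    MvPolynomial.pderiv v x ∈ Submodule.span ℂ (SS h (k + 1)) := by
  classical
  obtain ⟨j, R, C, hjk, hjm, hR, hC, rfl⟩ := hx
  rw [eltP, pderiv_mul]
  set ℓv : Fin n × Fin n := (⟨m, h⟩, ⟨m, h⟩) with hℓv
  by_cases hv : v = ℓv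
  · subst hv
    have h0 : MvPolynomial.pderiv ℓv (sperm h.le R C) = 0 := by
      refine sperm_pderiv_ne _ _ _ _ (fun p hpR q hqC hveq => ?_)
      have := congrArg (fun z : Fin n × Fin n => z.1.val) hveq
      simp only [hℓv, Fin.coe_castLE] at this
      exact absurd this.symm (Nat.ne_of_lt p.isLt)
    rw [h0, mul_zero, add_zero, pderiv_pow, pderiv_X_self, mul_one]
    rcases Nat.eq_zero_or_pos (n - m - (k - j)) with ha | ha
    · rw [ha]
      simp
    · have hrw : ((n - m - (k - j) : ℕ) : MvPolynomial (Fin n × Fin n) ℂ) *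
          MvPolynomial.X ℓv ^ (n - m - (k - j) - 1) * sperm h.le R C
          = ((n - m - (k - j) : ℕ) : ℂ) • eltP h (n - m - (k - j) - 1) R C := by
        rw [eltP, MvPolynomial.smul_eq_C_mul, ← mul_assoc,
          map_natCast (MvPolynomial.C : ℂ →+* MvPolynomial (Fin n × Fin n) ℂ)]
      rw [hrw]
      refine Submodule.smul_mem _ _ (Submodule.subset_span ?_)
      exact ⟨j, R, C, by omega, hjm, hR, hC, by rw [show n - m - (k + 1 - j) =
        n - m - (k - j) - 1 by omega]⟩
  · have hXv : MvPolynomial.pderiv v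
        ((MvPolynomial.X ℓv : MvPolynomial (Fin n × Fin n) ℂ) ^ (n - m - (k - j))) = 0 := by
      rw [pderiv_pow, MvPolynomial.pderiv_X_of_ne (show ℓv ≠ v from fun hh => hv hh.symm),
        mul_zero]
    rw [hXv, zero_mul, zero_add]
    by_cases hv2 : ∃ p, p ∈ R ∧ ∃ q, q ∈ C ∧ v = (Fin.castLE h.le p, Fin.castLE h.le q)
    · obtain ⟨p, hpR, q, hqC, rfl⟩ := hv2
      rw [sperm_pderiv_mem h.le R C p q hpR hqC]
      apply Submodule.subset_span
      have hcard : 0 < R.card := Finset.card_pos.2 ⟨p, hpR⟩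
      refine ⟨j + 1, R.erase p, C.erase q, by omega, by omega, ?_, ?_, ?_⟩
      · rw [Finset.card_erase_of_mem hpR, hR]; omega
      · rw [Finset.card_erase_of_mem hqC, hC]; omega
      · rw [eltP, show n - m - (k + 1 - (j + 1)) = n - m - (k - j) by omega]
    · push_neg at hv2
      rw [sperm_pderiv_ne h.le R C v (fun p hpR q hqC hveq => ?_), mul_zero]
      · exact Submodule.zero_mem _
      · exact (hv2 p hpR q hqC) hveq

lemma pderivList_mem (h : m < n) : ∀ L : List (Fin n × Fin n), L.length ≤ n - m →
    pderivList L (paddedPerm m n) ∈ Submodule.span ℂ (SS h L.length) := by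
  intro L
  induction L with
  | nil =>
    intro _
    refine Submodule.subset_span ⟨0, Finset.univ, Finset.univ, le_rfl, Nat.zero_le m, ?_, ?_, ?_⟩
    · simp
    · simp
    · exact paddedPerm_eq h
  | cons v L ih =>
    intro hlen
    have hL : L.length ≤ n - m := le_trans (Nat.le_succ _) (by simpa using hlen)
    have hmem := ih hL
    show MvPolynomial.pderiv v (pderivList L (paddedPerm m n)) ∈
      Submodule.span ℂ (SS h (L.length + 1))
    refine Submodule.span_induction
      (p := fun y _ => MvPolynomial.pderiv v y ∈ Submodule.span ℂ (SS h (L.length + 1)))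
      (fun x hx => eltP_pderiv_mem h L.length (by simpa using hlen) v x hx)
      (by show MvPolynomial.pderiv v 0 ∈ _; simp)
      (fun x y _ _ hx hy => by
        show MvPolynomial.pderiv v (x + y) ∈ _
        rw [map_add]; exact Submodule.add_mem _ hx hy)
      (fun c x _ hx => by
        show MvPolynomial.pderiv v (c • x) ∈ _
        rw [(MvPolynomial.pderiv v).map_smul c x]
        exact Submodule.smul_mem _ _ hx) hmem

end Aux

/-- For `n > m`, `k ≤ n−m` and every `τ ≥ 0`, the shifted partial derivatives of the padded
permanent (as a degree-`n` polynomial in `n²` variables) satisfy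
`dim I^{ℓ^{n−m}·perm_m, k}_{n−k+τ} ≤ (Σ_{j=0}^{k} C(m,j)²)·C(n²+τ−1, τ)`. -/
theorem padded_permanent_shifted_partials_upper_bound (m n : ℕ) (hmn : m < n) :
    ∀ k : ℕ, k ≤ n - m → ∀ τ : ℕ,
      Module.finrank ℂ (shiftedPartialsSpan (paddedPerm m n) k τ) ≤
        (∑ j ∈ Finset.range (k + 1), Nat.choose m j ^ 2) *
          Nat.choose (n ^ 2 + τ - 1) τ := by
  intro k hk τ
  classical
  set K := min k m with hK
  set Dmon : Finset ((Fin n × Fin n) →₀ ℕ) :=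
    (Finset.univ : Finset (Sym (Fin n × Fin n) τ)).image
      (fun s : Sym (Fin n × Fin n) τ => Multiset.toFinsupp s.1) with hDmon
  set DJ : Finset ((_ : ℕ) × (Finset (Fin m) × Finset (Fin m))) :=
    (Finset.range (K + 1)).sigma
      (fun j => (Finset.powersetCard (m - j) Finset.univ) ×ˢ
        (Finset.powersetCard (m - j) Finset.univ)) with hDJ
  set F : ((Fin n × Fin n) →₀ ℕ) × ((_ : ℕ) × (Finset (Fin m) × Finset (Fin m))) →
      MvPolynomial (Fin n × Fin n) ℂ :=
    fun x => MvPolynomial.monomial x.1 (1 : ℂ) *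
      eltP hmn (n - m - (k - x.2.1)) x.2.2.1 x.2.2.2 with hF
  set T : Finset (MvPolynomial (Fin n × Fin n) ℂ) := (Dmon ×ˢ DJ).image F with hT
  have hspan : shiftedPartialsSpan (paddedPerm m n) k τ ≤
      Submodule.span ℂ (T : Set (MvPolynomial (Fin n × Fin n) ℂ)) := by
    rw [shiftedPartialsSpan, Submodule.span_le]
    rintro q ⟨L, M, hL, hM, rfl⟩
    have h1 : pderivList L (paddedPerm m n) ∈ Submodule.span ℂ (SS hmn k) := by
      rw [← hL]
      exact pderivList_mem hmn L (hL ▸ hk)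
    refine Submodule.span_induction
      (p := fun y _ => (MvPolynomial.monomial M (1 : ℂ)) * y ∈
        Submodule.span ℂ (T : Set (MvPolynomial (Fin n × Fin n) ℂ))) ?_ ?_ ?_ ?_ h1
    · rintro x ⟨j, R, C, hjk, hjm, hR, hC, rfl⟩
      apply Submodule.subset_span
      refine Finset.mem_coe.2 (Finset.mem_image.2 ⟨(M, ⟨j, (R, C)⟩), ?_, rfl⟩)
      refine Finset.mem_product.2 ⟨?_, ?_⟩
      · refine Finset.mem_image.2
          ⟨(⟨Finsupp.toMultiset M, ?_⟩ : Sym (Fin n × Fin n) τ), Finset.mem_univ _, ?_⟩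
        · rw [Finsupp.card_toMultiset]
          exact hM
        · exact Finsupp.toMultiset_toFinsupp M
      · refine Finset.mem_sigma.2 ⟨Finset.mem_range.2 (show j < K + 1 by omega), ?_⟩
        refine Finset.mem_product.2 ⟨?_, ?_⟩
        · exact Finset.mem_powersetCard.2 ⟨Finset.subset_univ _, hR⟩
        · exact Finset.mem_powersetCard.2 ⟨Finset.subset_univ _, hC⟩
    · show MvPolynomial.monomial M (1 : ℂ) * 0 ∈ _
      rw [mul_zero]
      exact Submodule.zero_mem _
    · intro x y _ _ hx hy
      show MvPolynomial.monomial M (1 : ℂ) * (x + y) ∈ _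
      rw [mul_add]
      exact Submodule.add_mem _ hx hy
    · intro c x _ hx
      show MvPolynomial.monomial M (1 : ℂ) * (c • x) ∈ _
      rw [mul_smul_comm]
      exact Submodule.smul_mem _ _ hx
  have hfin : Module.finrank ℂ (shiftedPartialsSpan (paddedPerm m n) k τ) ≤ T.card := by
    refine le_trans (Submodule.finrank_mono hspan) ?_
    exact finrank_span_finset_le_card T
  refine le_trans hfin ?_
  have hTcard : T.card ≤ Dmon.card * DJ.card :=
    le_trans (Finset.card_image_le) (le_of_eq (Finset.card_product _ _))
  have hDmonCard : Dmon.card ≤ Nat.choose (n ^ 2 + τ - 1) τ := by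
    refine le_trans Finset.card_image_le ?_
    rw [Finset.card_univ, Sym.card_sym_eq_multichoose, Nat.multichoose_eq]
    apply le_of_eq
    congr 2
    rw [Fintype.card_prod, Fintype.card_fin, pow_two]
  have hDJCard : DJ.card ≤ ∑ j ∈ Finset.range (k + 1), Nat.choose m j ^ 2 := by
    rw [hDJ, Finset.card_sigma]
    have hterm : ∀ j ∈ Finset.range (K + 1),
        ((Finset.powersetCard (m - j) (Finset.univ : Finset (Fin m))) ×ˢ
          (Finset.powersetCard (m - j) (Finset.univ : Finset (Fin m)))).card
          = Nat.choose m j ^ 2 := by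
      intro j hj
      have hjm : j ≤ m := le_trans (Nat.lt_succ_iff.1 (Finset.mem_range.1 hj))
        (min_le_right _ _)
      rw [Finset.card_product, Finset.card_powersetCard, Finset.card_univ,
        Fintype.card_fin, Nat.choose_symm hjm, pow_two]
    rw [Finset.sum_congr rfl hterm]
    refine Finset.sum_le_sum_of_subset (Finset.range_subset_range.2 (by omega))
  calc T.card ≤ Dmon.card * DJ.card := hTcard
    _ ≤ Nat.choose (n ^ 2 + τ - 1) τ * ∑ j ∈ Finset.range (k + 1), Nat.choose m j ^ 2 :=
        Nat.mul_le_mul hDmonCard hDJCard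
    _ = _ := Nat.mul_comm _ _
end

section
/- There exists a constant M such that for all m > M, all n > 2m² + 2m, all k with m/2 ≤ k < 2m, and all τ with 1 ≤ τ ≤ n³/(6m), the inequality C(n+k, 2k) · C(n² + τ − 2k, τ) > C(2m, m) · C(n² + τ − 1, τ) holds. -/
namespace CaseC4Helpers
open Real Nat

lemma fact_bound : ∀ p : ℕ, ((Nat.factorial (p+1) : ℝ)) * 2 ^ p ≤ ((p:ℝ)+1) ^ (p+2) := by
  intro p
  induction p with
  | zero => simp [Nat.factorial]
  | succ p ih =>
    have hp1 : (0:ℝ) < (p:ℝ) + 1 := by positivity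
    have hbern : (2:ℝ) ≤ (1 + 1/((p:ℝ)+1)) ^ (p+2) := by
      have hnn : (0:ℝ) ≤ 1/((p:ℝ)+1) := by positivity
      have h := one_add_mul_le_pow (a := 1/((p:ℝ)+1)) (by linarith : (-2:ℝ) ≤ 1/((p:ℝ)+1)) (p+2)
      have h2 : (1:ℝ) ≤ ((p:ℝ)+2) * (1/((p:ℝ)+1)) := by
        rw [mul_one_div, le_div_iff₀ hp1]; linarith
      have h3 : ((p+2:ℕ):ℝ) = (p:ℝ)+2 := by push_cast; ring
      rw [h3] at h
      linarith
    have key : 2 * (((p:ℝ)+1) ^ (p+2)) ≤ ((p:ℝ)+2) ^ (p+2) := by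
      have h3 : (((p:ℝ)+1) * (1 + 1/((p:ℝ)+1))) = (p:ℝ)+2 := by field_simp; ring
      calc 2 * (((p:ℝ)+1) ^ (p+2)) ≤ (1 + 1/((p:ℝ)+1)) ^ (p+2) * ((p:ℝ)+1) ^ (p+2) := by
            have := mul_le_mul_of_nonneg_right hbern (by positivity : (0:ℝ) ≤ ((p:ℝ)+1)^(p+2))
            linarith
        _ = (((p:ℝ)+1) * (1 + 1/((p:ℝ)+1))) ^ (p+2) := by rw [mul_pow]; ring
        _ = ((p:ℝ)+2) ^ (p+2) := by rw [h3]
    have hfac : ((Nat.factorial (p+2) : ℝ)) = ((p:ℝ)+2) * (Nat.factorial (p+1) : ℝ) := by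
      rw [show p+2 = (p+1)+1 from rfl, Nat.factorial_succ]; push_cast; ring
    have hgoalcast : ((p+1:ℕ):ℝ) + 1 = (p:ℝ) + 2 := by push_cast; ring
    rw [show p+1+1 = p+2 from rfl, hgoalcast]
    calc ((Nat.factorial (p+2) : ℝ)) * 2 ^ (p+1)
        = ((p:ℝ)+2) * ((Nat.factorial (p+1) : ℝ) * 2 ^ p) * 2 := by rw [hfac]; ring
      _ ≤ ((p:ℝ)+2) * (((p:ℝ)+1) ^ (p+2)) * 2 := by
          nlinarith [ih, (by positivity : (0:ℝ) ≤ (p:ℝ)+2)]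
      _ = ((p:ℝ)+2) * (2 * (((p:ℝ)+1) ^ (p+2))) := by ring
      _ ≤ ((p:ℝ)+2) * (((p:ℝ)+2) ^ (p+2)) := by
          exact mul_le_mul_of_nonneg_left key (by positivity : (0:ℝ) ≤ (p:ℝ)+2)
      _ = ((p:ℝ)+2) ^ (p+1+2) := by rw [show p+1+2 = (p+2)+1 from rfl, pow_succ]; ring

lemma choose_top_succ (a t : ℕ) (h : t ≤ a) :
    (a+1) * Nat.choose a t = Nat.choose (a+1) t * (a+1-t) := by
  have h1 := Nat.add_one_mul_choose_eq a (a - t)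
  -- succ a * a.choose (a-t) = (a+1).choose (a-t+1) * succ (a-t)
  rw [Nat.choose_symm h] at h1
  have h2 : a - t + 1 = (a+1) - t := by omega
  rw [h2] at h1
  have h3 : Nat.choose (a+1) ((a+1) - t) = Nat.choose (a+1) t := Nat.choose_symm_of_eq_add (by omega)
  rw [h3] at h1
  simpa [Nat.succ_eq_add_one, h2] using h1

lemma choose_ratio (t b L : ℕ) (hL : 0 < L) (hb : t + L ≤ b) :
    ∀ j : ℕ, (Nat.choose (b + j) t : ℝ) ≤ (Nat.choose b t : ℝ) * (1 + (t:ℝ) / (L:ℝ)) ^ j := by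
  intro j
  induction j with
  | zero => simp
  | succ j ih =>
    have ht : t ≤ b + j := by omega
    have hid := choose_top_succ (b+j) t ht
    have hDsum : b + j + 1 - t + t = b + j + 1 := by omega
    set D : ℕ := b + j + 1 - t with hD
    have hDL : L ≤ D := by omega
    have hD0 : (0:ℝ) < (D:ℝ) := by exact_mod_cast Nat.pos_of_ne_zero (by omega)
    have hL0 : (0:ℝ) < (L:ℝ) := by exact_mod_cast hL
    have hcast : ((D:ℝ) + t) * (Nat.choose (b+j) t : ℝ) = (Nat.choose (b+j+1) t : ℝ) * D := by
      have : (D + t) * Nat.choose (b+j) t = Nat.choose (b+j+1) t * D := by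
        rw [hDsum]; exact hid
      exact_mod_cast this
    have heq : (Nat.choose (b+j+1) t : ℝ) = (Nat.choose (b+j) t : ℝ) * (1 + (t:ℝ)/(D:ℝ)) := by
      field_simp
      nlinarith [hcast]
    have hmono : 1 + (t:ℝ)/(D:ℝ) ≤ 1 + (t:ℝ)/(L:ℝ) := by
      have : (L:ℝ) ≤ (D:ℝ) := by exact_mod_cast hDL
      gcongr
    have hq0 : (0:ℝ) ≤ 1 + (t:ℝ)/(L:ℝ) := by positivity
    calc (Nat.choose (b+(j+1)) t : ℝ) = (Nat.choose (b+j) t : ℝ) * (1 + (t:ℝ)/(D:ℝ)) := by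
          rw [show b+(j+1) = b+j+1 from rfl]; exact heq
      _ ≤ (Nat.choose (b+j) t : ℝ) * (1 + (t:ℝ)/(L:ℝ)) := by
          exact mul_le_mul_of_nonneg_left hmono (Nat.cast_nonneg _)
      _ ≤ ((Nat.choose b t : ℝ) * (1 + (t:ℝ)/(L:ℝ)) ^ j) * (1 + (t:ℝ)/(L:ℝ)) := by
          exact mul_le_mul_of_nonneg_right ih hq0
      _ = (Nat.choose b t : ℝ) * (1 + (t:ℝ)/(L:ℝ)) ^ (j+1) := by rw [pow_succ]; ring

lemma pow_self_le (m s : ℕ) (hm : 1 ≤ m) (h1 : m ≤ s) (h2 : s ≤ 4*m) :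
    ((s:ℝ)) ^ s ≤ ((m:ℝ)) ^ s * 12 ^ (s - m) := by
  set r : ℕ := s - m with hr
  have hsr : s = m + r := by omega
  have hM0 : (0:ℝ) < (m:ℝ) := by exact_mod_cast hm
  have hcast : (s:ℝ) = (m:ℝ) + (r:ℝ) := by rw [hsr]; push_cast; ring
  have hexp3 : Real.exp 1 ≤ 3 := by
    have := Real.exp_one_lt_d9; linarith
  -- bound 1 : (m+r)^m ≤ m^m * 3^r
  have hb1 : ((m:ℝ) + (r:ℝ)) ^ m ≤ (m:ℝ) ^ m * 3 ^ r := by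
    have hstep : (m:ℝ) + (r:ℝ) ≤ (m:ℝ) * Real.exp ((r:ℝ)/(m:ℝ)) := by
      have h := Real.add_one_le_exp ((r:ℝ)/(m:ℝ))
      have := mul_le_mul_of_nonneg_left h hM0.le
      calc (m:ℝ) + (r:ℝ) = (m:ℝ) * ((r:ℝ)/(m:ℝ) + 1) := by field_simp; ring
        _ ≤ (m:ℝ) * Real.exp ((r:ℝ)/(m:ℝ)) := this
    calc ((m:ℝ) + (r:ℝ)) ^ m ≤ ((m:ℝ) * Real.exp ((r:ℝ)/(m:ℝ))) ^ m := by
          apply pow_le_pow_left₀ (by positivity) hstep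
      _ = (m:ℝ) ^ m * Real.exp ((r:ℝ)/(m:ℝ)) ^ m := by rw [mul_pow]
      _ = (m:ℝ) ^ m * Real.exp ((m:ℝ) * ((r:ℝ)/(m:ℝ))) := by rw [← Real.exp_nat_mul]
      _ = (m:ℝ) ^ m * Real.exp ((r:ℕ) * (1:ℝ)) := by
          congr 1
          congr 1
          field_simp
      _ = (m:ℝ) ^ m * Real.exp 1 ^ r := by rw [Real.exp_nat_mul]
      _ ≤ (m:ℝ) ^ m * 3 ^ r := by
          exact mul_le_mul_of_nonneg_left (pow_le_pow_left₀ (Real.exp_nonneg 1) hexp3 r) (by positivity)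
  -- bound 2 : (m+r)^r ≤ m^r * 4^r
  have hb2 : ((m:ℝ) + (r:ℝ)) ^ r ≤ (m:ℝ) ^ r * 4 ^ r := by
    have hstep : (m:ℝ) + (r:ℝ) ≤ (m:ℝ) * 4 := by
      have : (r:ℝ) ≤ 3 * (m:ℝ) := by exact_mod_cast (by omega : r ≤ 3*m)
      linarith
    calc ((m:ℝ) + (r:ℝ)) ^ r ≤ ((m:ℝ) * 4) ^ r := pow_le_pow_left₀ (by positivity) hstep r
      _ = (m:ℝ) ^ r * 4 ^ r := by rw [mul_pow]
  calc ((s:ℝ)) ^ s = ((m:ℝ) + (r:ℝ)) ^ m * ((m:ℝ) + (r:ℝ)) ^ r := by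
        rw [hcast, ← pow_add, ← hsr]
    _ ≤ ((m:ℝ) ^ m * 3 ^ r) * ((m:ℝ) ^ r * 4 ^ r) := by
        apply mul_le_mul hb1 hb2 (by positivity) (by positivity)
    _ = (m:ℝ) ^ (m + r) * 12 ^ r := by rw [pow_add]; ring_nf; rw [show (12:ℝ) = 3*4 by norm_num, mul_pow]; ring
    _ = (m:ℝ) ^ s * 12 ^ (s - m) := by rw [← hsr]

end CaseC4Helpers

open CaseC4Helpers Real Nat in
set_option maxHeartbeats 4000000 in
/-- **Case C4, subcase `k ≥ m/2`.** There is a constant `M` such that for all `m > M`,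
all `n > 2m² + 2m`, all `k` with `m/2 ≤ k < 2m`, and all `τ` with `1 ≤ τ ≤ n³/(6m)`,
`C(n+k, 2k)·C(n²+τ−2k, τ) > C(2m, m)·C(n²+τ−1, τ)`. -/
theorem case_C4_large_k :
    ∃ M : ℕ, ∀ m : ℕ, m > M → ∀ n : ℕ, n > 2 * m ^ 2 + 2 * m →
      ∀ k : ℕ, m ≤ 2 * k → k < 2 * m →
        ∀ τ : ℕ, 1 ≤ τ → 6 * m * τ ≤ n ^ 3 →
          Nat.choose (2 * m) m * Nat.choose (n ^ 2 + τ - 1) τ <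
            Nat.choose (n + k) (2 * k) * Nat.choose (n ^ 2 + τ - 2 * k) τ := by
  use 100
  intro m hm n hn k hmk hk2m τ hτ hτn
  -- basic nat facts
  have hm1 : 1 ≤ m := by omega
  have f1 : 4 * m ≤ 2 * m ^ 2 := by nlinarith
  have f2 : 2 * k < n := by omega
  have fnn : n ≤ n ^ 2 := by nlinarith
  have f3 : 2 * k < n ^ 2 := by omega
  have f4 : k ≤ n := by omega
  have hk1 : 1 ≤ k := by omega
  -- real versions of hypotheses
  have hX : 2*(m:ℝ)^2 + 2*(m:ℝ) + 1 ≤ (n:ℝ) := by exact_mod_cast (by omega : 2*m^2+2*m+1 ≤ n)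
  have hMu : (101:ℝ) ≤ (m:ℝ) := by exact_mod_cast hm
  have hMu0 : (0:ℝ) < (m:ℝ) := by linarith
  have hX0 : (0:ℝ) < (n:ℝ) := by nlinarith
  have hT1 : (1:ℝ) ≤ (τ:ℝ) := by exact_mod_cast hτ
  have hK0 : (1:ℝ) ≤ (k:ℝ) := by exact_mod_cast hk1
  have hKle : (k:ℝ) ≤ 2*(m:ℝ) := by exact_mod_cast (le_of_lt hk2m)
  have hmKle : (m:ℝ) ≤ 2*(k:ℝ) := by exact_mod_cast hmk
  have hTn : 6*(m:ℝ)*(τ:ℝ) ≤ (n:ℝ)^3 := by exact_mod_cast hτn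
  -- the denominator L
  set L : ℕ := n^2 - 2*k with hLdef
  have hL0 : 0 < L := by omega
  have hLcast : (L:ℝ) = (n:ℝ)^2 - 2*(k:ℝ) := by
    rw [hLdef]; push_cast [Nat.cast_sub (le_of_lt f3)]; ring
  have hL0R : (0:ℝ) < (L:ℝ) := by exact_mod_cast hL0
  set q : ℝ := 1 + (τ:ℝ)/(L:ℝ) with hqdef
  have hq1 : (1:ℝ) ≤ q := by
    rw [hqdef]; nlinarith [div_nonneg (by positivity : (0:ℝ) ≤ (τ:ℝ)) hL0R.le]
  have hq0 : (0:ℝ) ≤ q := by linarith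
  -- Step A : ratio bound
  have e1 : n^2+τ-2*k + (2*k-1) = n^2+τ-1 := by omega
  have hA : (Nat.choose (n^2+τ-1) τ : ℝ) ≤ (Nat.choose (n^2+τ-2*k) τ : ℝ) * q^(2*k-1) := by
    have := choose_ratio τ (n^2+τ-2*k) L hL0 (by omega) (2*k-1)
    rw [e1] at this
    exact this
  -- Step B : central binomial bound
  have hB : (Nat.choose (2*m) m : ℝ) ≤ 4^m := by
    have h1 : Nat.choose (2*m) m ≤ Nat.choose (2*m+1) m := Nat.choose_le_choose m (by omega)
    have h2 : Nat.choose (2*m+1) m ≤ 4^m := Nat.choose_middle_le_pow m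
    exact_mod_cast h1.trans h2
  -- Step C : lower bound ingredients for choose (n+k) (2k)
  have hdesc : ((n:ℝ) - (k:ℝ))^(2*k) ≤ (Nat.choose (n+k) (2*k) : ℝ) * ((2*k).factorial : ℝ) := by
    have h1 : (n - k)^(2*k) ≤ (n + k + 1 - 2*k)^(2*k) := Nat.pow_le_pow_left (by omega) _
    have h2 := Nat.pow_sub_le_descFactorial (n+k) (2*k)
    have h3 : (n+k).descFactorial (2*k) = (2*k).factorial * Nat.choose (n+k) (2*k) :=
      Nat.descFactorial_eq_factorial_mul_choose _ _
    have h4 : (n - k)^(2*k) ≤ (2*k).factorial * Nat.choose (n+k) (2*k) := by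
      rw [← h3]; exact h1.trans h2
    calc ((n:ℝ) - (k:ℝ))^(2*k) = (((n - k : ℕ)):ℝ)^(2*k) := by
          rw [Nat.cast_sub f4]
      _ ≤ (((2*k).factorial * Nat.choose (n+k) (2*k) : ℕ) : ℝ) := by exact_mod_cast h4
      _ = (Nat.choose (n+k) (2*k) : ℝ) * ((2*k).factorial : ℝ) := by push_cast; ring
  have hfact : (((2*k).factorial : ℝ)) * 2^(2*k-1) ≤ (2*(k:ℝ))^(2*k+1) := by
    have h0 := fact_bound (2*k-1)
    have e2 : 2*k-1+1 = 2*k := by omega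
    have e3 : 2*k-1+2 = 2*k+1 := by omega
    rw [e2, e3] at h0
    have e4 : ((2*k-1:ℕ):ℝ) + 1 = 2*(k:ℝ) := by
      push_cast [Nat.cast_sub (by omega : 1 ≤ 2*k)]; ring
    rw [e4] at h0
    exact h0
  -- constants
  set c : ℝ := 1 + 4/(m:ℝ) with hcdef
  set d : ℝ := 1 - 1/(m:ℝ) with hddef
  have hc0 : (0:ℝ) < c := by rw [hcdef]; positivity
  have hd0 : (0:ℝ) < d := by
    rw [hddef]
    have h1 : 1/(m:ℝ) ≤ 1/101 := by
      apply div_le_div_of_nonneg_left <;> linarith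
    linarith
  have hexp3 : Real.exp 1 ≤ 3 := by have := Real.exp_one_lt_d9; linarith
  -- q ≤ n c / (6 m)
  have hqB : q ≤ (n:ℝ)*c/(6*(m:ℝ)) := by
    have hTL : (τ:ℝ)/(L:ℝ) ≤ ((n:ℝ)+1)/(6*(m:ℝ)) := by
      rw [div_le_div_iff₀ hL0R (by positivity), hLcast]
      have hcube : (n:ℝ)^3 ≤ ((n:ℝ)+1)*((n:ℝ)^2 - 2*(k:ℝ)) := by
        have hsq : (2*(m:ℝ)^2+2*(m:ℝ)+1) * (n:ℝ) ≤ (n:ℝ)^2 := by nlinarith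
        have h2k : 2*(k:ℝ)*((n:ℝ)+1) ≤ 4*(m:ℝ)*(n:ℝ) + 4*(m:ℝ) := by nlinarith
        have hc1 : 4*(m:ℝ) ≤ 2*(m:ℝ)^2-2*(m:ℝ)+1 := by nlinarith
        have hc2 : (1:ℝ) ≤ (n:ℝ) := by nlinarith
        have hc3 : (0:ℝ) ≤ 2*(m:ℝ)^2-2*(m:ℝ)+1 := by nlinarith
        have hlift : 4*(m:ℝ)*(n:ℝ) + 4*(m:ℝ) ≤ (2*(m:ℝ)^2+2*(m:ℝ)+1) * (n:ℝ) := by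
          nlinarith [mul_le_mul hc1 hc2 (by norm_num : (0:ℝ) ≤ 1) hc3,
            mul_le_mul_of_nonneg_right hc1 (by linarith : (0:ℝ) ≤ (n:ℝ))]
        nlinarith
      calc (τ:ℝ) * (6*(m:ℝ)) = 6*(m:ℝ)*(τ:ℝ) := by ring
        _ ≤ (n:ℝ)^3 := hTn
        _ ≤ ((n:ℝ)+1)*((n:ℝ)^2 - 2*(k:ℝ)) := hcube
    rw [le_div_iff₀ (by positivity : (0:ℝ) < 6*(m:ℝ))]
    have h5 : q * (6*(m:ℝ)) ≤ 6*(m:ℝ) + ((n:ℝ)+1) := by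
      rw [hqdef]
      have h51 := mul_le_mul_of_nonneg_right hTL (by positivity : (0:ℝ) ≤ 6*(m:ℝ))
      rw [div_mul_cancel₀ _ (by positivity : (6*(m:ℝ)) ≠ 0)] at h51
      have : (1 + (τ:ℝ)/(L:ℝ)) * (6*(m:ℝ)) = 6*(m:ℝ) + ((τ:ℝ)/(L:ℝ))*(6*(m:ℝ)) := by ring
      rw [this]; linarith
    have h6 : 6*(m:ℝ) + ((n:ℝ)+1) ≤ (n:ℝ)*c := by
      rw [hcdef]
      have h8 : (n:ℝ)*(1+4/(m:ℝ)) = (n:ℝ) + 4*(n:ℝ)/(m:ℝ) := by field_simp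
      rw [h8]
      have h9 : 6*(m:ℝ)+1 ≤ 4*(n:ℝ)/(m:ℝ) := by
        rw [le_div_iff₀ hMu0]; nlinarith
      linarith
    linarith
  -- c^(2k-1) ≤ 3^16
  have hcexp : c^(2*k-1) ≤ (3:ℝ)^(16:ℕ) := by
    have h1 : c ≤ Real.exp (4/(m:ℝ)) := by
      rw [hcdef]; have := Real.add_one_le_exp (4/(m:ℝ)); linarith
    calc c^(2*k-1) ≤ Real.exp (4/(m:ℝ))^(2*k-1) := pow_le_pow_left₀ hc0.le h1 _
      _ = Real.exp (((2*k-1:ℕ):ℝ) * (4/(m:ℝ))) := by rw [Real.exp_nat_mul]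
      _ ≤ Real.exp 16 := by
          apply Real.exp_le_exp.mpr
          have hj : ((2*k-1:ℕ):ℝ) ≤ 4*(m:ℝ) := by
            exact_mod_cast (by omega : 2*k-1 ≤ 4*m)
          calc ((2*k-1:ℕ):ℝ) * (4/(m:ℝ)) ≤ 4*(m:ℝ) * (4/(m:ℝ)) :=
                mul_le_mul_of_nonneg_right hj (by positivity)
            _ = 16 := by field_simp; ring
      _ = Real.exp 1 ^ (16:ℕ) := by
          rw [← Real.exp_nat_mul]; norm_num
      _ ≤ (3:ℝ)^(16:ℕ) := pow_le_pow_left₀ (Real.exp_nonneg 1) hexp3 _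
  -- (3^8)⁻¹ ≤ d^(2k)
  have hdexp : ((3:ℝ)^(8:ℕ))⁻¹ ≤ d^(2*k) := by
    have hkey : (1:ℝ) ≤ d * (1 + 2/(m:ℝ)) := by
      have he : d * (1 + 2/(m:ℝ)) = 1 + ((m:ℝ) - 2)/(m:ℝ)^2 := by
        rw [hddef]; field_simp; ring
      rw [he]
      have : (0:ℝ) ≤ ((m:ℝ)-2)/(m:ℝ)^2 := div_nonneg (by linarith) (by positivity)
      linarith
    have h2 : (1:ℝ) ≤ d * Real.exp (2/(m:ℝ)) := by
      have h21 : 1 + 2/(m:ℝ) ≤ Real.exp (2/(m:ℝ)) := by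
        have := Real.add_one_le_exp (2/(m:ℝ)); linarith
      calc (1:ℝ) ≤ d * (1 + 2/(m:ℝ)) := hkey
        _ ≤ d * Real.exp (2/(m:ℝ)) := mul_le_mul_of_nonneg_left h21 hd0.le
    have h1 : Real.exp (-(2/(m:ℝ))) ≤ d := by
      rw [Real.exp_neg, inv_eq_one_div, div_le_iff₀ (Real.exp_pos _)]
      linarith [h2]
    calc ((3:ℝ)^(8:ℕ))⁻¹ ≤ (Real.exp 1 ^ (8:ℕ))⁻¹ := by
          apply inv_anti₀ (by positivity) (pow_le_pow_left₀ (Real.exp_nonneg 1) hexp3 _)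
      _ = Real.exp (-8) := by
          rw [← Real.exp_nat_mul, ← Real.exp_neg]; norm_num
      _ ≤ Real.exp (((2*k:ℕ):ℝ) * (-(2/(m:ℝ)))) := by
          apply Real.exp_le_exp.mpr
          have hj : ((2*k:ℕ):ℝ) ≤ 4*(m:ℝ) := by exact_mod_cast (by omega : 2*k ≤ 4*m)
          have hj0 : (0:ℝ) ≤ ((2*k:ℕ):ℝ) := Nat.cast_nonneg _
          have : ((2*k:ℕ):ℝ) * (2/(m:ℝ)) ≤ 4*(m:ℝ) * (2/(m:ℝ)) :=
            mul_le_mul_of_nonneg_right hj (by positivity)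
          have he : 4*(m:ℝ) * (2/(m:ℝ)) = 8 := by field_simp; ring
          nlinarith [this, he]
      _ = Real.exp (-(2/(m:ℝ))) ^ (2*k) := by rw [← Real.exp_nat_mul]
      _ ≤ d^(2*k) := pow_le_pow_left₀ (Real.exp_nonneg _) h1 _
  -- (2k)^(2k+1) bound
  have hW : (2*(k:ℝ))^(2*k+1) ≤ (4*(m:ℝ)) * (((m:ℝ))^(2*k) * 12^(2*k-m)) := by
    have h1 : (2*(k:ℝ))^(2*k) ≤ ((m:ℝ))^(2*k) * 12^(2*k-m) := by
      have hh := pow_self_le m (2*k) hm1 hmk (by omega)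
      have e : ((2*k:ℕ):ℝ) = 2*(k:ℝ) := by push_cast; ring
      rw [e] at hh; exact hh
    calc (2*(k:ℝ))^(2*k+1) = (2*(k:ℝ))^(2*k) * (2*(k:ℝ)) := pow_succ _ _
      _ ≤ (((m:ℝ))^(2*k) * 12^(2*k-m)) * (4*(m:ℝ)) :=
          mul_le_mul h1 (by linarith) (by positivity) (by positivity)
      _ = (4*(m:ℝ)) * (((m:ℝ))^(2*k) * 12^(2*k-m)) := by ring
  -- scalar comparison
  have hsc : (8:ℝ)*3^(16:ℕ)*4^m ≤ 2*((3:ℝ)^(8:ℕ))⁻¹*12^(m-1) := by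
    have e9 : (12:ℝ)^(m-1) = 4^(m-1)*3^(m-1) := by
      rw [show (12:ℝ)=4*3 by norm_num, mul_pow]
    have e10 : (4:ℝ)^m = 4^(m-1)*4 := by rw [← pow_succ]; congr 1; omega
    rw [e9, e10]
    have h28 : (3:ℝ)^(28:ℕ) ≤ 3^(m-1) := pow_le_pow_right₀ (by norm_num) (by omega)
    have hmono : (2:ℝ)*((3:ℝ)^(8:ℕ))⁻¹*3^(28:ℕ) ≤ 2*((3:ℝ)^(8:ℕ))⁻¹*3^(m-1) := by
      apply mul_le_mul_of_nonneg_left h28 (by positivity)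
    have hval : (8:ℝ)*3^(16:ℕ)*4 ≤ 2*((3:ℝ)^(8:ℕ))⁻¹*3^(28:ℕ) := by norm_num
    calc (8:ℝ)*3^(16:ℕ)*(4^(m-1)*4) = ((8:ℝ)*3^(16:ℕ)*4) * 4^(m-1) := by ring
      _ ≤ (2*((3:ℝ)^(8:ℕ))⁻¹*3^(m-1)) * 4^(m-1) :=
          mul_le_mul_of_nonneg_right (hval.trans hmono) (by positivity)
      _ = 2*((3:ℝ)^(8:ℕ))⁻¹*(4^(m-1)*3^(m-1)) := by ring
  have hscalar : 2 * 4^m * (3:ℝ)^(16:ℕ) * ((4*(m:ℝ)) * (((m:ℝ))^(2*k) * 12^(2*k-m)))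
      ≤ (12*(m:ℝ))^(2*k-1) * ((2*(m:ℝ)^2) * ((3:ℝ)^(8:ℕ))⁻¹) := by
    have e5 : (12*(m:ℝ))^(2*k-1) = 12^(2*k-1) * (m:ℝ)^(2*k-1) := mul_pow _ _ _
    have e6 : (12:ℝ)^(2*k-1) = 12^(2*k-m) * 12^(m-1) := by rw [← pow_add]; congr 1; omega
    have e7 : (m:ℝ)^(2*k-1) * (m:ℝ)^2 = (m:ℝ)^(2*k+1) := by rw [← pow_add]; congr 1; omega
    have e8 : (m:ℝ)^(2*k) * (m:ℝ) = (m:ℝ)^(2*k+1) := by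
      rw [← pow_succ]
    have hmain := mul_le_mul_of_nonneg_right hsc
      (by positivity : (0:ℝ) ≤ (m:ℝ)^(2*k+1) * 12^(2*k-m))
    calc 2 * 4^m * (3:ℝ)^(16:ℕ) * ((4*(m:ℝ)) * (((m:ℝ))^(2*k) * 12^(2*k-m)))
        = ((8:ℝ)*3^(16:ℕ)*4^m) * (((m:ℝ)^(2*k) * (m:ℝ)) * 12^(2*k-m)) := by ring
      _ = ((8:ℝ)*3^(16:ℕ)*4^m) * ((m:ℝ)^(2*k+1) * 12^(2*k-m)) := by rw [e8]
      _ ≤ (2*((3:ℝ)^(8:ℕ))⁻¹*12^(m-1)) * ((m:ℝ)^(2*k+1) * 12^(2*k-m)) := hmain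
      _ = (12^(2*k-m) * 12^(m-1)) * ((m:ℝ)^(2*k-1) * (m:ℝ)^2) * (2 * ((3:ℝ)^(8:ℕ))⁻¹) := by
          rw [e7]; ring
      _ = (12*(m:ℝ))^(2*k-1) * ((2*(m:ℝ)^2) * ((3:ℝ)^(8:ℕ))⁻¹) := by
          rw [e5, e6]; ring
  -- K'' : core inequality
  have hK2 : 2 * 4^m * c^(2*k-1) * (2*(k:ℝ))^(2*k+1)
      ≤ (12*(m:ℝ))^(2*k-1) * ((n:ℝ) * d^(2*k)) := by
    calc 2 * 4^m * c^(2*k-1) * (2*(k:ℝ))^(2*k+1)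
        ≤ 2 * 4^m * (3:ℝ)^(16:ℕ) * ((4*(m:ℝ)) * (((m:ℝ))^(2*k) * 12^(2*k-m))) := by
          apply mul_le_mul (mul_le_mul_of_nonneg_left hcexp (by positivity)) hW
            (by positivity) (by positivity)
      _ ≤ (12*(m:ℝ))^(2*k-1) * ((2*(m:ℝ)^2) * ((3:ℝ)^(8:ℕ))⁻¹) := hscalar
      _ ≤ (12*(m:ℝ))^(2*k-1) * ((n:ℝ) * d^(2*k)) := by
          apply mul_le_mul_of_nonneg_left _ (by positivity)
          have hXmu : 2*(m:ℝ)^2 ≤ (n:ℝ) := by linarith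
          calc (2*(m:ℝ)^2) * ((3:ℝ)^(8:ℕ))⁻¹ ≤ (2*(m:ℝ)^2) * d^(2*k) :=
                mul_le_mul_of_nonneg_left hdexp (by positivity)
            _ ≤ (n:ℝ) * d^(2*k) :=
                mul_le_mul_of_nonneg_right hXmu (pow_nonneg hd0.le _)
  -- K : main multiplicative inequality
  have hKmain : 2 * (4^m * ((n:ℝ)*c/(6*(m:ℝ)))^(2*k-1)) * (2*(k:ℝ))^(2*k+1)
      ≤ ((n:ℝ) - (k:ℝ))^(2*k) * 2^(2*k-1) := by
    set G : ℝ := (n:ℝ)/(6*(m:ℝ)) with hGdef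
    have hG0 : (0:ℝ) ≤ G := by positivity
    have e11 : (n:ℝ)*c/(6*(m:ℝ)) = G * c := by rw [hGdef]; ring
    have e12 : G * (12*(m:ℝ)) = 2*(n:ℝ) := by rw [hGdef]; field_simp; ring
    have hXd : (n:ℝ)*d ≤ (n:ℝ) - (k:ℝ) := by
      rw [hddef]
      have he : (n:ℝ)*(1-1/(m:ℝ)) = (n:ℝ) - (n:ℝ)/(m:ℝ) := by ring
      rw [he]
      have : (k:ℝ) ≤ (n:ℝ)/(m:ℝ) := by
        rw [le_div_iff₀ hMu0]; nlinarith
      linarith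
    have hXd0 : (0:ℝ) ≤ (n:ℝ)*d := mul_nonneg hX0.le hd0.le
    have e2k : 2*k-1+1 = 2*k := by omega
    have epow : (n:ℝ)^(2*k-1) * (n:ℝ) = (n:ℝ)^(2*k) := by rw [← pow_succ, e2k]
    calc 2 * (4^m * ((n:ℝ)*c/(6*(m:ℝ)))^(2*k-1)) * (2*(k:ℝ))^(2*k+1)
        = G^(2*k-1) * (2 * 4^m * c^(2*k-1) * (2*(k:ℝ))^(2*k+1)) := by
          rw [e11, mul_pow G c]; ring
      _ ≤ G^(2*k-1) * ((12*(m:ℝ))^(2*k-1) * ((n:ℝ) * d^(2*k))) :=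
          mul_le_mul_of_nonneg_left hK2 (pow_nonneg hG0 _)
      _ = (G*(12*(m:ℝ)))^(2*k-1) * ((n:ℝ) * d^(2*k)) := by
          rw [mul_pow G (12*(m:ℝ))]; ring
      _ = (2*(n:ℝ))^(2*k-1) * ((n:ℝ) * d^(2*k)) := by rw [e12]
      _ = ((n:ℝ)*d)^(2*k) * 2^(2*k-1) := by
          rw [mul_pow 2 (n:ℝ), mul_pow (n:ℝ) d, ← epow]; ring
      _ ≤ ((n:ℝ) - (k:ℝ))^(2*k) * 2^(2*k-1) :=
          mul_le_mul_of_nonneg_right (pow_le_pow_left₀ hXd0 hXd _) (by positivity)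
  -- combine to strict bound on choose (n+k) (2k)
  have hW0 : (0:ℝ) < (2*(k:ℝ))^(2*k+1) := pow_pos (by linarith) _
  have hC1 : ((n:ℝ) - (k:ℝ))^(2*k) * 2^(2*k-1)
      ≤ (Nat.choose (n+k) (2*k) : ℝ) * (2*(k:ℝ))^(2*k+1) := by
    calc ((n:ℝ)-(k:ℝ))^(2*k) * 2^(2*k-1)
        ≤ ((Nat.choose (n+k) (2*k) : ℝ) * ((2*k).factorial : ℝ)) * 2^(2*k-1) :=
          mul_le_mul_of_nonneg_right hdesc (by positivity)
      _ = (Nat.choose (n+k) (2*k) : ℝ) * (((2*k).factorial : ℝ) * 2^(2*k-1)) := by ring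
      _ ≤ (Nat.choose (n+k) (2*k) : ℝ) * (2*(k:ℝ))^(2*k+1) :=
          mul_le_mul_of_nonneg_left hfact (Nat.cast_nonneg _)
  have hBpos : (0:ℝ) < 4^m * ((n:ℝ)*c/(6*(m:ℝ)))^(2*k-1) := by
    apply mul_pos (pow_pos (by norm_num) _)
    exact pow_pos (div_pos (mul_pos hX0 hc0) (by positivity)) _
  have h2le : 2 * (4^m * ((n:ℝ)*c/(6*(m:ℝ)))^(2*k-1)) ≤ (Nat.choose (n+k) (2*k) : ℝ) := by
    apply le_of_mul_le_mul_right _ hW0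
    exact hKmain.trans hC1
  have hC : 4^m * q^(2*k-1) < (Nat.choose (n+k) (2*k) : ℝ) := by
    have hstep : (4:ℝ)^m * q^(2*k-1) ≤ 4^m * ((n:ℝ)*c/(6*(m:ℝ)))^(2*k-1) :=
      mul_le_mul_of_nonneg_left (pow_le_pow_left₀ hq0 hqB _) (by positivity)
    linarith
  -- conclusion
  have hC3pos : (1:ℝ) ≤ (Nat.choose (n^2+τ-2*k) τ : ℝ) := by
    exact_mod_cast Nat.succ_le_of_lt (Nat.choose_pos (by omega))
  have hfin : (Nat.choose (2*m) m : ℝ) * (Nat.choose (n^2+τ-1) τ : ℝ)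
      < (Nat.choose (n+k) (2*k) : ℝ) * (Nat.choose (n^2+τ-2*k) τ : ℝ) := by
    calc (Nat.choose (2*m) m : ℝ) * (Nat.choose (n^2+τ-1) τ : ℝ)
        ≤ 4^m * ((Nat.choose (n^2+τ-2*k) τ : ℝ) * q^(2*k-1)) :=
          mul_le_mul hB hA (Nat.cast_nonneg _) (by positivity)
      _ = (4^m * q^(2*k-1)) * (Nat.choose (n^2+τ-2*k) τ : ℝ) := by ring
      _ < (Nat.choose (n+k) (2*k) : ℝ) * (Nat.choose (n^2+τ-2*k) τ : ℝ) :=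
          mul_lt_mul_of_pos_right hC (by linarith)
  exact_mod_cast hfin
end

section
/- There exists a constant M such that for all m > M, all n > 2m² + 2m, all k with 1 ≤ k < m/2, and all τ with 1 ≤ τ ≤ n³/(6m), the inequality C(n+k, 2k) · C(n² + τ − 2k, τ) > k · C(m, k)² · C(n² + τ − 1, τ) holds. -/
/-!
Write `a = n² - 2k`, `d = 2k - 1` and `b = n + 1 - k`. The quotient
`C(n² + τ - 1, τ) / C(n² + τ - 2k, τ)` is a product of `d` factors `(a + i + τ) / (a + i)`, each
at most `(n² + τ) / (a + 1)`. On the other side `C(m, k)² ≤ C(2m, 2k) ≤ (2m)^{2k} / (2k)!` and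
`C(n + k, 2k) ≥ b^{2k} / (2k)!`, so it suffices that `2mk < b` and `2m(n² + τ) ≤ b(a + 1)`;
both follow from `n > 2m² + 2m` and `6mτ ≤ n³`, already for every `m`.
-/

open Nat

lemma choose_sq_le_choose_two_mul (m k : ℕ) : m.choose k ^ 2 ≤ (2 * m).choose (2 * k) := by
  rw [two_mul, two_mul, Nat.add_choose_eq, sq]
  exact Finset.single_le_sum (f := fun ij : ℕ × ℕ => m.choose ij.1 * m.choose ij.2)
    (fun _ _ => Nat.zero_le _)
    (Finset.HasAntidiagonal.mem_antidiagonal.mpr (rfl : (k, k).1 + (k, k).2 = k + k))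

lemma choose_add_mul_pow_le (a τ : ℕ) : ∀ d : ℕ,
    (a + d + τ).choose τ * (a + 1) ^ d ≤ (a + τ).choose τ * (a + d + τ + 1) ^ d
  | 0 => by simp
  | d + 1 => by
    have hstep : (a + d + 1 + τ).choose τ * (a + d + 1) =
        (a + d + τ).choose τ * (a + d + τ + 1) := by
      rw [Nat.choose_mul_succ_eq, show a + d + τ + 1 - τ = a + d + 1 by omega,
        show a + d + 1 + τ = a + d + τ + 1 by omega]
    calc (a + (d + 1) + τ).choose τ * (a + 1) ^ (d + 1)
        ≤ (a + d + 1 + τ).choose τ * (a + d + 1) * (a + 1) ^ d := by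
          rw [pow_succ, ← add_assoc, mul_comm _ (a + 1), ← mul_assoc]; gcongr; omega
      _ = (a + d + τ).choose τ * (a + 1) ^ d * (a + d + τ + 1) := by rw [hstep]; ring
      _ ≤ (a + τ).choose τ * (a + d + τ + 1) ^ d * (a + d + τ + 1) :=
          Nat.mul_le_mul_right _ (choose_add_mul_pow_le a τ d)
      _ ≤ (a + τ).choose τ * (a + (d + 1) + τ + 1) ^ (d + 1) := by
          rw [pow_succ, ← mul_assoc]; gcongr <;> omega

lemma mul_pow_lt_pow_mul_pow {m k b X Y d : ℕ} (hd : 2 * k = d + 1) (hY : 0 < Y)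
    (hb : 2 * m * k < b) (hXY : 2 * m * X ≤ b * Y) :
    k * (2 * m) ^ (2 * k) * X ^ d < b ^ (2 * k) * Y ^ d := by
  have hbY : 0 < (b * Y) ^ d := pow_pos (Nat.mul_pos (by omega) hY) d
  calc k * (2 * m) ^ (2 * k) * X ^ d = 2 * m * k * (2 * m * X) ^ d := by rw [hd]; ring
    _ ≤ 2 * m * k * (b * Y) ^ d := by gcongr
    _ < b * (b * Y) ^ d := by gcongr
    _ = b ^ (2 * k) * Y ^ d := by rw [hd]; ring

lemma mul_choose_sq_mul_pow_lt {m n k b X Y d : ℕ} (hbk : n + 1 = b + k) (hd : 2 * k = d + 1)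
    (hY : 0 < Y) (hb : 2 * m * k < b) (hXY : 2 * m * X ≤ b * Y) :
    k * m.choose k ^ 2 * X ^ d < (n + k).choose (2 * k) * Y ^ d := by
  have hupper : (2 * k)! * (2 * m).choose (2 * k) ≤ (2 * m) ^ (2 * k) := by
    rw [← Nat.descFactorial_eq_factorial_mul_choose]
    exact Nat.descFactorial_le_pow _ _
  have hlower : b ^ (2 * k) ≤ (2 * k)! * (n + k).choose (2 * k) := by
    rw [← Nat.descFactorial_eq_factorial_mul_choose, show b = n + k + 1 - 2 * k by omega]
    exact Nat.pow_sub_le_descFactorial _ _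
  refine Nat.lt_of_mul_lt_mul_left (a := (2 * k)!) ?_
  calc (2 * k)! * (k * m.choose k ^ 2 * X ^ d)
      = k * ((2 * k)! * m.choose k ^ 2) * X ^ d := by ring
    _ ≤ k * ((2 * k)! * (2 * m).choose (2 * k)) * X ^ d := by
        gcongr; exact choose_sq_le_choose_two_mul m k
    _ ≤ k * (2 * m) ^ (2 * k) * X ^ d := by gcongr
    _ < b ^ (2 * k) * Y ^ d := mul_pow_lt_pow_mul_pow hd hY hb hXY
    _ ≤ (2 * k)! * (n + k).choose (2 * k) * Y ^ d := by gcongr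
    _ = (2 * k)! * ((n + k).choose (2 * k) * Y ^ d) := mul_assoc _ _ _

lemma two_mul_mul_lt {m n k b : ℕ} (hn : 2 * m ^ 2 + 2 * m < n) (hk : 2 * k < m)
    (hb : n + 1 = b + k) : 2 * m * k < b := by
  nlinarith

lemma two_mul_mul_add_le {m n k τ a b : ℕ} (hn : 2 * m ^ 2 + 2 * m < n) (hk : 2 * k < m)
    (hτ : 6 * m * τ ≤ n ^ 3) (ha : n ^ 2 = a + 2 * k) (hb : n + 1 = b + k) :
    2 * m * (n ^ 2 + τ) ≤ b * (a + 1) := by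
  have h3m : 3 * m ≤ n := by nlinarith
  have h9m : 9 * m + 1 ≤ 2 * n := by nlinarith
  have hcubic : 9 * m * n ^ 2 + 3 * m * n ≤ 2 * n ^ 3 := by nlinarith
  have hprod : ((n : ℤ) - m) * ((n : ℤ) ^ 2 - m) ≤ b * (a + 1) := by
    apply mul_le_mul <;> nlinarith
  zify at hτ hcubic ⊢
  nlinarith

/-- **Case C4, subcase `k < m/2`.** There is a constant `M` such that for all `m > M`,
all `n > 2m² + 2m`, all `k` with `1 ≤ k < m/2`, and all `τ` with `1 ≤ τ ≤ n³/(6m)`,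
`C(n+k, 2k)·C(n²+τ−2k, τ) > k·C(m, k)²·C(n²+τ−1, τ)`. -/
theorem case_C4_small_k :
    ∃ M : ℕ, ∀ m : ℕ, m > M → ∀ n : ℕ, n > 2 * m ^ 2 + 2 * m →
      ∀ k : ℕ, 1 ≤ k → 2 * k < m →
        ∀ τ : ℕ, 1 ≤ τ → 6 * m * τ ≤ n ^ 3 →
          k * Nat.choose m k ^ 2 * Nat.choose (n ^ 2 + τ - 1) τ <
            Nat.choose (n + k) (2 * k) * Nat.choose (n ^ 2 + τ - 2 * k) τ := by
  refine ⟨0, fun m _ n hn k hk1 hk2 τ _ hτ => ?_⟩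
  obtain ⟨a, ha⟩ := Nat.exists_eq_add_of_le' (show 2 * k ≤ n ^ 2 by nlinarith)
  obtain ⟨b, hb⟩ := Nat.exists_eq_add_of_le' (show k ≤ n + 1 by nlinarith)
  obtain ⟨d, hd⟩ := Nat.exists_eq_add_of_le' (show 1 ≤ 2 * k by omega)
  have hratio := choose_add_mul_pow_le a τ d
  rw [show a + d + τ + 1 = n ^ 2 + τ by omega, show a + d + τ = n ^ 2 + τ - 1 by omega,
    show a + τ = n ^ 2 + τ - 2 * k by omega] at hratio
  have hcore := mul_choose_sq_mul_pow_lt hb hd a.succ_pos (two_mul_mul_lt hn hk2 hb)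
    (two_mul_mul_add_le hn hk2 hτ ha hb)
  have hpos : 0 < (n ^ 2 + τ - 2 * k).choose τ := Nat.choose_pos (by omega)
  refine Nat.lt_of_mul_lt_mul_right (a := (a + 1) ^ d) ?_
  calc k * m.choose k ^ 2 * (n ^ 2 + τ - 1).choose τ * (a + 1) ^ d
      ≤ k * m.choose k ^ 2 * ((n ^ 2 + τ - 2 * k).choose τ * (n ^ 2 + τ) ^ d) := by
        rw [mul_assoc]; gcongr
    _ = k * m.choose k ^ 2 * (n ^ 2 + τ) ^ d * (n ^ 2 + τ - 2 * k).choose τ := by ring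
    _ < (n + k).choose (2 * k) * (a + 1) ^ d * (n ^ 2 + τ - 2 * k).choose τ := by gcongr
    _ = (n + k).choose (2 * k) * (n ^ 2 + τ - 2 * k).choose τ * (a + 1) ^ d := by ring
end
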